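/- arXiv:2603.17089 — 9 statements merged into one kernel-verified Lean document; each statement's English description precedes it below -/
import Mathlib

section
/- Let x = (δ, ω, E'q) be admissible, u ∈ ℝ, and suppose x⁺ := f(x, u) is also admissible. Assume μ ≥ 0 and E_fd ≥ 0. Define the residual e := (Φ(x⁺) − Φ(x_s)) − A·(Φ(x) − Φ(x_s)) − B·(u − u_s) ∈ ℝ⁷. Then ‖e‖₂ ≤ ε_A·‖Φ(x) − Φ(x_s)‖₂ + c₀, where ε_A := 2·Δt + c₆ + c₇ with c₆ = c₇ := 2·α_q·μ + α_q·E_fd + E'q,max·Δt, and c₀ := (2 + 2·E'q,max)·(Δt·ω_max)². Moreover the output map is exactly linear in the lifted deviation: defining y(x) := (ω − ω_s, γ·E'q·sin δ) ∈ ℝ², one has y(x) − y(x_s) = C·(Φ(x) − Φ(x_s)). -/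
open Real

/-- Parameters of the discretized synchronous generator model. -/
structure GenParams where
  Δt : ℝ
  M : ℝ
  Td0 : ℝ
  D : ℝ
  ωs : ℝ
  Vinf : ℝ
  XS : ℝ
  Xd : ℝ
  Xd' : ℝ
  Xe : ℝ
  Efd : ℝ
  hΔt : 0 < Δt
  hM : 0 < M
  hTd0 : 0 < Td0
  hXS : XS ≠ 0

namespace GenParams

variable (P : GenParams)

noncomputable def αd : ℝ := P.Δt / P.M
noncomputable def αq : ℝ := P.Δt / P.Td0
noncomputable def γ : ℝ := P.Vinf / P.XS
noncomputable def κ : ℝ := (P.Xd + P.Xe) / P.XS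
noncomputable def μ : ℝ := (P.Xd - P.Xd') * P.Vinf / P.XS

/-- The discretized generator dynamics `f : ℝ³ × ℝ → ℝ³`. -/
noncomputable def f (x : Fin 3 → ℝ) (u : ℝ) : Fin 3 → ℝ :=
  ![x 0 + P.Δt * (x 1 - P.ωs),
    x 1 + P.αd * (u - P.D * (x 1 - P.ωs) - P.γ * (x 2 * Real.sin (x 0))),
    x 2 + P.αq * (P.Efd - P.κ * x 2 + P.μ * Real.cos (x 0))]

/-- The Koopman lifting `Φ : ℝ³ → ℝ⁷`. -/
noncomputable def Φ (x : Fin 3 → ℝ) : Fin 7 → ℝ :=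
  ![x 0, x 1 - P.ωs, x 2, Real.sin (x 0), Real.cos (x 0),
    x 2 * Real.sin (x 0), x 2 * Real.cos (x 0)]

/-- The Koopman `A` matrix. -/
noncomputable def Amat : Matrix (Fin 7) (Fin 7) ℝ :=
  !![1, P.Δt, 0, 0, 0, 0, 0;
     0, 1 - P.αd * P.D, 0, 0, 0, -(P.αd * P.γ), 0;
     0, 0, 1 - P.αq * P.κ, 0, P.αq * P.μ, 0, 0;
     0, 0, 0, 1, 0, 0, 0;
     0, 0, 0, 0, 1, 0, 0;
     0, 0, 0, 0, 0, 1 - P.αq * P.κ, 0;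
     0, 0, 0, 0, 0, 0, 1 - P.αq * P.κ]

/-- The Koopman `B` matrix (as a vector, since `m = 1`). -/
noncomputable def Bvec : Fin 7 → ℝ := ![0, P.αd, 0, 0, 0, 0, 0]

/-- The Koopman output matrix `C`. -/
noncomputable def Cmat : Matrix (Fin 2) (Fin 7) ℝ :=
  !![0, 1, 0, 0, 0, 0, 0;
     0, 0, 0, 0, 0, P.γ, 0]

/-- Admissible states of the operating regime. -/
def Admissible (ωmax Eqmax : ℝ) (x : Fin 3 → ℝ) : Prop :=
  |x 1 - P.ωs| ≤ ωmax ∧ 0 ≤ x 2 ∧ x 2 ≤ Eqmax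

end GenParams

/-- Euclidean norm of a vector in `ℝⁿ`. -/

noncomputable def enorm {n : ℕ} (v : Fin n → ℝ) : ℝ := Real.sqrt (∑ i, v i ^ 2)


private lemma sqrt_four_sq_le (a b c d : ℝ) :
    Real.sqrt (a ^ 2 + b ^ 2 + c ^ 2 + d ^ 2) ≤ |a| + |b| + |c| + |d| := by
  have h : a ^ 2 + b ^ 2 + c ^ 2 + d ^ 2 ≤ (|a| + |b| + |c| + |d|) ^ 2 := by
    nlinarith [abs_nonneg a, abs_nonneg b, abs_nonneg c, abs_nonneg d,
      sq_abs a, sq_abs b, sq_abs c, sq_abs d,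
      mul_nonneg (abs_nonneg a) (abs_nonneg b), mul_nonneg (abs_nonneg a) (abs_nonneg c),
      mul_nonneg (abs_nonneg a) (abs_nonneg d), mul_nonneg (abs_nonneg b) (abs_nonneg c),
      mul_nonneg (abs_nonneg b) (abs_nonneg d), mul_nonneg (abs_nonneg c) (abs_nonneg d)]
  calc Real.sqrt (a ^ 2 + b ^ 2 + c ^ 2 + d ^ 2) ≤ Real.sqrt ((|a| + |b| + |c| + |d|) ^ 2) :=
        Real.sqrt_le_sqrt h
    _ = |a| + |b| + |c| + |d| := Real.sqrt_sq (by positivity)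

private lemma abs_comp_le_enorm {n : ℕ} (v : Fin n → ℝ) (i : Fin n) : |v i| ≤ _root_.enorm v := by
  rw [_root_.enorm, ← Real.sqrt_sq_eq_abs]
  exact Real.sqrt_le_sqrt (Finset.single_le_sum (fun j _ => sq_nonneg (v j)) (Finset.mem_univ i))

private lemma abs_sin_le_abs' (t : ℝ) : |Real.sin t| ≤ |t| := by
  rcases eq_or_ne t 0 with h | h
  · simp [h]
  · exact (Real.abs_sin_lt_abs h).le

private lemma abs_sin_sub_sin (a b : ℝ) : |Real.sin a - Real.sin b| ≤ |a - b| := by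
  rw [Real.sin_sub_sin, abs_mul, abs_mul, abs_two]
  have h1 := abs_sin_le_abs' ((a - b) / 2)
  have h2 := Real.abs_cos_le_one ((a + b) / 2)
  have h3 : |(a - b) / 2| = |a - b| / 2 := by rw [abs_div]; norm_num
  nlinarith [abs_nonneg (Real.sin ((a - b) / 2)), abs_nonneg (a - b)]

private lemma abs_cos_sub_cos (a b : ℝ) : |Real.cos a - Real.cos b| ≤ |a - b| := by
  rw [Real.cos_sub_cos, abs_mul, abs_mul]
  have h0 : |(-2 : ℝ)| = 2 := by norm_num
  rw [h0]
  have h1 := abs_sin_le_abs' ((a - b) / 2)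
  have h2 := Real.abs_sin_le_one ((a + b) / 2)
  have h3 : |(a - b) / 2| = |a - b| / 2 := by rw [abs_div]; norm_num
  nlinarith [abs_nonneg (Real.sin ((a - b) / 2)), abs_nonneg (a - b),
    abs_nonneg (Real.sin ((a + b) / 2))]



private lemma vec7_0 {α : Type*} (a b c d e f g : α) : ![a,b,c,d,e,f,g] 0 = a := rfl
private lemma vec7_1 {α : Type*} (a b c d e f g : α) : ![a,b,c,d,e,f,g] 1 = b := rfl
private lemma vec7_2 {α : Type*} (a b c d e f g : α) : ![a,b,c,d,e,f,g] 2 = c := rfl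
private lemma vec7_3 {α : Type*} (a b c d e f g : α) : ![a,b,c,d,e,f,g] 3 = d := rfl
private lemma vec7_4 {α : Type*} (a b c d e f g : α) : ![a,b,c,d,e,f,g] 4 = e := rfl
private lemma vec7_5 {α : Type*} (a b c d e f g : α) : ![a,b,c,d,e,f,g] 5 = f := rfl
private lemma vec7_6 {α : Type*} (a b c d e f g : α) : ![a,b,c,d,e,f,g] 6 = g := rfl

set_option maxHeartbeats 1000000 in
/-- proportional-with-offset residual bound for the Koopman
embedding of the synchronous generator, and exact linearity of the output map. -/
theorem koopman_residual_bound_and_output_linear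
    (P : GenParams) (ωmax Eqmax : ℝ) (hωmax : 0 ≤ ωmax) (hEqmax : 0 ≤ Eqmax)
    (hsmall : P.Δt * ωmax ≤ 3)
    (xs : Fin 3 → ℝ) (us : ℝ) (hequil : P.f xs us = xs)
    (hμ : 0 ≤ P.μ) (hEfd : 0 ≤ P.Efd)
    (x : Fin 3 → ℝ) (u : ℝ)
    (hx : P.Admissible ωmax Eqmax x)
    (hx' : P.Admissible ωmax Eqmax (P.f x u)) :
    _root_.enorm ((P.Φ (P.f x u) - P.Φ xs) - P.Amat.mulVec (P.Φ x - P.Φ xs) - (u - us) • P.Bvec)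
      ≤ (2 * P.Δt + (2 * P.αq * P.μ + P.αq * P.Efd + Eqmax * P.Δt)
            + (2 * P.αq * P.μ + P.αq * P.Efd + Eqmax * P.Δt)) * _root_.enorm (P.Φ x - P.Φ xs)
          + (2 + 2 * Eqmax) * (P.Δt * ωmax) ^ 2
    ∧ (![x 1 - P.ωs, P.γ * (x 2 * Real.sin (x 0))]
        - ![xs 1 - P.ωs, P.γ * (xs 2 * Real.sin (xs 0))])
        = P.Cmat.mulVec (P.Φ x - P.Φ xs) := by
  classical
  obtain ⟨hωx, hE0, hEx⟩ := hx
  obtain ⟨hωx', hE0', hEx'⟩ := hx'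
  have hΔt := P.hΔt
  have hαd : 0 < P.αd := div_pos P.hΔt P.hM
  have hαq : 0 < P.αq := div_pos P.hΔt P.hTd0
  -- equilibrium facts
  have h0 := congrFun hequil 0
  have h1 := congrFun hequil 1
  have h2 := congrFun hequil 2
  simp only [GenParams.f, Matrix.cons_val_zero, Matrix.cons_val_one, Matrix.head_cons,
    Matrix.cons_val_two, Matrix.tail_cons] at h0 h1 h2
  have hs1 : xs 1 = P.ωs := by
    have h : P.Δt * (xs 1 - P.ωs) = 0 := by linarith
    rcases mul_eq_zero.mp h with h | h
    · exact absurd h (ne_of_gt hΔt)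
    · linarith
  have hus : us = P.γ * (xs 2 * Real.sin (xs 0)) := by
    have h : P.αd * (us - P.D * (xs 1 - P.ωs) - P.γ * (xs 2 * Real.sin (xs 0))) = 0 := by
      linarith
    rcases mul_eq_zero.mp h with h | h
    · exact absurd h (ne_of_gt hαd)
    · rw [hs1] at h; nlinarith [h]
  have hEfdeq : P.Efd = P.κ * xs 2 - P.μ * Real.cos (xs 0) := by
    have h : P.αq * (P.Efd - P.κ * xs 2 + P.μ * Real.cos (xs 0)) = 0 := by linarith
    rcases mul_eq_zero.mp h with h | h
    · exact absurd h (ne_of_gt hαq)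
    · linarith
  set δ := x 0 with hδ
  set ω := x 1 with hω
  set E := x 2 with hE
  set δp : ℝ := δ + P.Δt * (ω - P.ωs) with hδp
  set Ep : ℝ := E + P.αq * (P.Efd - P.κ * E + P.μ * Real.cos δ) with hEp
  have hfx2 : (P.f x u) 2 = Ep := by simp [GenParams.f, hEp, hE, hδ]
  have hEpmax : |Ep| ≤ Eqmax := by
    rw [hfx2] at hE0' hEx'
    exact abs_le.mpr ⟨by linarith, hEx'⟩
  set z : Fin 7 → ℝ := P.Φ x - P.Φ xs with hz
  have hz1 : z 1 = ω - P.ωs := by simp [hz, GenParams.Φ, hs1, hω]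
  have hz3 : z 3 = Real.sin δ - Real.sin (xs 0) := by simp [hz, GenParams.Φ, hδ]
  have hz4 : z 4 = Real.cos δ - Real.cos (xs 0) := by simp [hz, GenParams.Φ, hδ]
  have hz5 : z 5 = E * Real.sin δ - xs 2 * Real.sin (xs 0) := by
    simp [hz, GenParams.Φ, Pi.sub_apply, vec7_5, hE, hδ]
  -- the residual vector
  have hvfun : ((P.Φ (P.f x u) - P.Φ xs) - P.Amat.mulVec (P.Φ x - P.Φ xs) - (u - us) • P.Bvec)
      = ![0, 0, 0, Real.sin δp - Real.sin δ, Real.cos δp - Real.cos δ,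
          Ep * (Real.sin δp - Real.sin δ) + P.αq * P.Efd * (Real.sin δ - Real.sin (xs 0))
            + P.αq * P.μ * (Real.sin δ * Real.cos δ - Real.sin (xs 0) * Real.cos (xs 0)),
          Ep * (Real.cos δp - Real.cos δ) + P.αq * P.Efd * (Real.cos δ - Real.cos (xs 0))
            + P.αq * P.μ * (Real.cos δ * Real.cos δ - Real.cos (xs 0) * Real.cos (xs 0))] := by
    funext i
    fin_cases i <;>
      simp [GenParams.Φ, GenParams.f, GenParams.Amat, GenParams.Bvec, Matrix.mulVec,
        dotProduct, Fin.sum_univ_seven, -Matrix.mulVec_cons,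
        vec7_0, vec7_1, vec7_2, vec7_3, vec7_4, vec7_5, vec7_6, hs1, hus, hEp, hδp, hδ, hω, hE]
    · ring
    · ring
    · linear_combination P.αq * hEfdeq
    · linear_combination (P.αq * Real.sin (xs 0)) * hEfdeq
    · linear_combination (P.αq * Real.cos (xs 0)) * hEfdeq
  rw [hvfun]
  constructor
  · -- norm bound
    have henorm : _root_.enorm ![0, 0, 0, Real.sin δp - Real.sin δ, Real.cos δp - Real.cos δ,
          Ep * (Real.sin δp - Real.sin δ) + P.αq * P.Efd * (Real.sin δ - Real.sin (xs 0))
            + P.αq * P.μ * (Real.sin δ * Real.cos δ - Real.sin (xs 0) * Real.cos (xs 0)),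
          Ep * (Real.cos δp - Real.cos δ) + P.αq * P.Efd * (Real.cos δ - Real.cos (xs 0))
            + P.αq * P.μ * (Real.cos δ * Real.cos δ - Real.cos (xs 0) * Real.cos (xs 0))]
        = Real.sqrt ((Real.sin δp - Real.sin δ) ^ 2 + (Real.cos δp - Real.cos δ) ^ 2
            + (Ep * (Real.sin δp - Real.sin δ) + P.αq * P.Efd * (Real.sin δ - Real.sin (xs 0))
            + P.αq * P.μ * (Real.sin δ * Real.cos δ - Real.sin (xs 0) * Real.cos (xs 0))) ^ 2
            + (Ep * (Real.cos δp - Real.cos δ) + P.αq * P.Efd * (Real.cos δ - Real.cos (xs 0))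
            + P.αq * P.μ * (Real.cos δ * Real.cos δ - Real.cos (xs 0) * Real.cos (xs 0))) ^ 2) := by
      rw [_root_.enorm, Fin.sum_univ_seven]
      simp only [vec7_0, vec7_1, vec7_2, vec7_3, vec7_4, vec7_5, vec7_6]
      congr 1
      ring
    rw [henorm]
    set N := _root_.enorm z with hN
    have hN0 : 0 ≤ N := Real.sqrt_nonneg _
    have hzb1 : |ω - P.ωs| ≤ N := by rw [← hz1]; exact abs_comp_le_enorm z 1
    have hzb3 : |Real.sin δ - Real.sin (xs 0)| ≤ N := by rw [← hz3]; exact abs_comp_le_enorm z 3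
    have hzb4 : |Real.cos δ - Real.cos (xs 0)| ≤ N := by rw [← hz4]; exact abs_comp_le_enorm z 4
    have hsinb : |Real.sin δp - Real.sin δ| ≤ P.Δt * |ω - P.ωs| := by
      have := abs_sin_sub_sin δp δ
      have h2 : |δp - δ| = P.Δt * |ω - P.ωs| := by
        rw [hδp]; rw [show δ + P.Δt * (ω - P.ωs) - δ = P.Δt * (ω - P.ωs) by ring,
          abs_mul, abs_of_pos hΔt]
      linarith [this, h2.le, h2.ge]
    have hcosb : |Real.cos δp - Real.cos δ| ≤ P.Δt * |ω - P.ωs| := by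
      have := abs_cos_sub_cos δp δ
      have h2 : |δp - δ| = P.Δt * |ω - P.ωs| := by
        rw [hδp]; rw [show δ + P.Δt * (ω - P.ωs) - δ = P.Δt * (ω - P.ωs) by ring,
          abs_mul, abs_of_pos hΔt]
      linarith [this, h2.le, h2.ge]
    have hsincos : |Real.sin δ * Real.cos δ - Real.sin (xs 0) * Real.cos (xs 0)| ≤
        |Real.sin δ - Real.sin (xs 0)| + |Real.cos δ - Real.cos (xs 0)| := by
      have heq : Real.sin δ * Real.cos δ - Real.sin (xs 0) * Real.cos (xs 0)
          = (Real.sin δ - Real.sin (xs 0)) * Real.cos δ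
            + Real.sin (xs 0) * (Real.cos δ - Real.cos (xs 0)) := by ring
      rw [heq]
      calc _ ≤ |(Real.sin δ - Real.sin (xs 0)) * Real.cos δ|
            + |Real.sin (xs 0) * (Real.cos δ - Real.cos (xs 0))| := abs_add_le _ _
        _ ≤ |Real.sin δ - Real.sin (xs 0)| * 1 + 1 * |Real.cos δ - Real.cos (xs 0)| := by
            rw [abs_mul, abs_mul]
            gcongr
            · exact Real.abs_cos_le_one δ
            · exact Real.abs_sin_le_one (xs 0)
        _ = _ := by ring
    have hcoscos : |Real.cos δ * Real.cos δ - Real.cos (xs 0) * Real.cos (xs 0)| ≤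
        |Real.cos δ - Real.cos (xs 0)| + |Real.cos δ - Real.cos (xs 0)| := by
      have heq : Real.cos δ * Real.cos δ - Real.cos (xs 0) * Real.cos (xs 0)
          = (Real.cos δ - Real.cos (xs 0)) * Real.cos δ
            + Real.cos (xs 0) * (Real.cos δ - Real.cos (xs 0)) := by ring
      rw [heq]
      calc _ ≤ |(Real.cos δ - Real.cos (xs 0)) * Real.cos δ|
            + |Real.cos (xs 0) * (Real.cos δ - Real.cos (xs 0))| := abs_add_le _ _
        _ ≤ |Real.cos δ - Real.cos (xs 0)| * 1 + 1 * |Real.cos δ - Real.cos (xs 0)| := by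
            rw [abs_mul, abs_mul]
            gcongr
            · exact Real.abs_cos_le_one δ
            · exact Real.abs_cos_le_one (xs 0)
        _ = _ := by ring
    have hb3 : |Real.sin δp - Real.sin δ| ≤ P.Δt * N := by
      calc |Real.sin δp - Real.sin δ| ≤ P.Δt * |ω - P.ωs| := hsinb
        _ ≤ P.Δt * N := by gcongr
    have hb4 : |Real.cos δp - Real.cos δ| ≤ P.Δt * N := by
      calc |Real.cos δp - Real.cos δ| ≤ P.Δt * |ω - P.ωs| := hcosb
        _ ≤ P.Δt * N := by gcongr
    have hb5 : |Ep * (Real.sin δp - Real.sin δ) + P.αq * P.Efd * (Real.sin δ - Real.sin (xs 0))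
            + P.αq * P.μ * (Real.sin δ * Real.cos δ - Real.sin (xs 0) * Real.cos (xs 0))|
        ≤ (2 * P.αq * P.μ + P.αq * P.Efd + Eqmax * P.Δt) * N := by
      calc _ ≤ |Ep * (Real.sin δp - Real.sin δ)|
            + |P.αq * P.Efd * (Real.sin δ - Real.sin (xs 0))|
            + |P.αq * P.μ * (Real.sin δ * Real.cos δ - Real.sin (xs 0) * Real.cos (xs 0))| :=
          (abs_add_le _ _).trans (by gcongr; exact abs_add_le _ _)
        _ ≤ Eqmax * (P.Δt * N) + (P.αq * P.Efd) * N + (P.αq * P.μ) * (N + N) := by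
            have t1 : |Ep * (Real.sin δp - Real.sin δ)| ≤ Eqmax * (P.Δt * N) := by
              rw [abs_mul]; exact mul_le_mul hEpmax hb3 (abs_nonneg _) hEqmax
            have t2 : |P.αq * P.Efd * (Real.sin δ - Real.sin (xs 0))| ≤ (P.αq * P.Efd) * N := by
              rw [abs_mul, abs_mul, abs_of_pos hαq, abs_of_nonneg hEfd]
              exact mul_le_mul_of_nonneg_left hzb3 (by positivity)
            have t3 : |P.αq * P.μ * (Real.sin δ * Real.cos δ - Real.sin (xs 0) * Real.cos (xs 0))|
                ≤ (P.αq * P.μ) * (N + N) := by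
              rw [abs_mul, abs_mul, abs_of_pos hαq, abs_of_nonneg hμ]
              refine mul_le_mul_of_nonneg_left ?_ (by positivity)
              exact hsincos.trans (by linarith)
            linarith
        _ = _ := by ring
    have hb6 : |Ep * (Real.cos δp - Real.cos δ) + P.αq * P.Efd * (Real.cos δ - Real.cos (xs 0))
            + P.αq * P.μ * (Real.cos δ * Real.cos δ - Real.cos (xs 0) * Real.cos (xs 0))|
        ≤ (2 * P.αq * P.μ + P.αq * P.Efd + Eqmax * P.Δt) * N := by
      calc _ ≤ |Ep * (Real.cos δp - Real.cos δ)|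
            + |P.αq * P.Efd * (Real.cos δ - Real.cos (xs 0))|
            + |P.αq * P.μ * (Real.cos δ * Real.cos δ - Real.cos (xs 0) * Real.cos (xs 0))| :=
          (abs_add_le _ _).trans (by gcongr; exact abs_add_le _ _)
        _ ≤ Eqmax * (P.Δt * N) + (P.αq * P.Efd) * N + (P.αq * P.μ) * (N + N) := by
            have t1 : |Ep * (Real.cos δp - Real.cos δ)| ≤ Eqmax * (P.Δt * N) := by
              rw [abs_mul]; exact mul_le_mul hEpmax hb4 (abs_nonneg _) hEqmax
            have t2 : |P.αq * P.Efd * (Real.cos δ - Real.cos (xs 0))| ≤ (P.αq * P.Efd) * N := by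
              rw [abs_mul, abs_mul, abs_of_pos hαq, abs_of_nonneg hEfd]
              exact mul_le_mul_of_nonneg_left hzb4 (by positivity)
            have t3 : |P.αq * P.μ * (Real.cos δ * Real.cos δ - Real.cos (xs 0) * Real.cos (xs 0))|
                ≤ (P.αq * P.μ) * (N + N) := by
              rw [abs_mul, abs_mul, abs_of_pos hαq, abs_of_nonneg hμ]
              refine mul_le_mul_of_nonneg_left ?_ (by positivity)
              exact hcoscos.trans (by linarith)
            linarith
        _ = _ := by ring
    have hsqrt := sqrt_four_sq_le (Real.sin δp - Real.sin δ) (Real.cos δp - Real.cos δ)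
        (Ep * (Real.sin δp - Real.sin δ) + P.αq * P.Efd * (Real.sin δ - Real.sin (xs 0))
            + P.αq * P.μ * (Real.sin δ * Real.cos δ - Real.sin (xs 0) * Real.cos (xs 0)))
        (Ep * (Real.cos δp - Real.cos δ) + P.αq * P.Efd * (Real.cos δ - Real.cos (xs 0))
            + P.αq * P.μ * (Real.cos δ * Real.cos δ - Real.cos (xs 0) * Real.cos (xs 0)))
    have hc0 : 0 ≤ (2 + 2 * Eqmax) * (P.Δt * ωmax) ^ 2 := by positivity
    calc _ ≤ _ := hsqrt
      _ ≤ P.Δt * N + P.Δt * N + (2 * P.αq * P.μ + P.αq * P.Efd + Eqmax * P.Δt) * N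
            + (2 * P.αq * P.μ + P.αq * P.Efd + Eqmax * P.Δt) * N :=
          add_le_add (add_le_add (add_le_add hb3 hb4) hb5) hb6
      _ = (2 * P.Δt + (2 * P.αq * P.μ + P.αq * P.Efd + Eqmax * P.Δt)
            + (2 * P.αq * P.μ + P.αq * P.Efd + Eqmax * P.Δt)) * N := by ring
      _ ≤ _ := le_add_of_nonneg_right hc0
  · -- output linearity
    funext i
    fin_cases i <;>
      simp [GenParams.Cmat, Matrix.mulVec, dotProduct,
        Fin.sum_univ_seven, -Matrix.mulVec_cons, vec7_0, vec7_1, vec7_2, vec7_3, vec7_4,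
        vec7_5, vec7_6, hz1, hz5, hs1] <;> ring
end

section
/- For every k ≥ 0, if ‖e_j‖₂ ≤ ē for all j < k, then ‖C·(z̄_k − ẑ_k)‖₂ ≤ ē · Σ_{l=0}^{k−1} ‖C·A^l‖₂; moreover this bound is never larger than the uniform one, i.e., Σ_{l=0}^{k−1} ‖C·A^l‖₂ ≤ ‖C‖₂ · Σ_{l=0}^{k−1} ‖A‖₂^l. -/
/-- Operator 2-norm of a real matrix (induced by the Euclidean norms). -/
noncomputable def mOpNorm {m n : ℕ} (A : Matrix (Fin m) (Fin n) ℝ) : ℝ :=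
  ‖LinearMap.toContinuousLinearMap (Matrix.toEuclideanLin A)‖


lemma enorm_eq {n : ℕ} (v : Fin n → ℝ) :
    _root_.enorm v = ‖(WithLp.equiv 2 (Fin n → ℝ)).symm v‖ := by
  rw [EuclideanSpace.norm_eq, _root_.enorm]
  congr 1; apply Finset.sum_congr rfl; intro i _
  simp [Real.norm_eq_abs, sq_abs]

lemma mOpNorm_nonneg {m n : ℕ} (A : Matrix (Fin m) (Fin n) ℝ) : 0 ≤ mOpNorm A :=
  norm_nonneg _

lemma enorm_mulVec_le {m n : ℕ} (A : Matrix (Fin m) (Fin n) ℝ) (v : Fin n → ℝ) :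
    _root_.enorm (A.mulVec v) ≤ mOpNorm A * _root_.enorm v := by
  rw [enorm_eq, enorm_eq, WithLp.equiv_symm_apply, WithLp.equiv_symm_apply, ← Matrix.toEuclideanLin_apply_piLp_toLp]
  exact (LinearMap.toContinuousLinearMap (Matrix.toEuclideanLin A)).le_opNorm _

lemma mOpNorm_mul_le {m n q : ℕ} (A : Matrix (Fin m) (Fin n) ℝ) (B : Matrix (Fin n) (Fin q) ℝ) :
    mOpNorm (A * B) ≤ mOpNorm A * mOpNorm B := by
  have h : LinearMap.toContinuousLinearMap (Matrix.toEuclideanLin (A * B)) =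
      (LinearMap.toContinuousLinearMap (Matrix.toEuclideanLin A)).comp
      (LinearMap.toContinuousLinearMap (Matrix.toEuclideanLin B)) := by
    ext x
    simp [Matrix.toEuclideanLin_apply, Matrix.mulVec_mulVec]
  rw [mOpNorm, h]
  exact ContinuousLinearMap.opNorm_comp_le _ _

lemma enorm_add_le_real {n : ℕ} (a b : Fin n → ℝ) : _root_.enorm (a + b) ≤ _root_.enorm a + _root_.enorm b := by
  rw [enorm_eq, enorm_eq, enorm_eq]
  have : (WithLp.equiv 2 (Fin n → ℝ)).symm (a + b) =
      (WithLp.equiv 2 (Fin n → ℝ)).symm a + (WithLp.equiv 2 (Fin n → ℝ)).symm b := rfl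
  rw [this]; exact norm_add_le _ _

lemma mOpNorm_pow_le {n : ℕ} (A : Matrix (Fin n) (Fin n) ℝ) (l : ℕ) :
    mOpNorm (A ^ l) ≤ mOpNorm A ^ l := by
  induction l with
  | zero =>
      simp only [pow_zero]
      have h : LinearMap.toContinuousLinearMap (Matrix.toEuclideanLin (1 : Matrix (Fin n) (Fin n) ℝ)) = ContinuousLinearMap.id ℝ _ := by
        ext x
        simp [Matrix.toEuclideanLin_apply]
      rw [mOpNorm, h]
      exact ContinuousLinearMap.norm_id_le
  | succ l ih =>
      calc mOpNorm (A ^ (l+1)) = mOpNorm (A ^ l * A) := by rw [pow_succ]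
      _ ≤ mOpNorm (A ^ l) * mOpNorm A := mOpNorm_mul_le _ _
      _ ≤ mOpNorm A ^ l * mOpNorm A :=
          mul_le_mul_of_nonneg_right ih (mOpNorm_nonneg A)
      _ = mOpNorm A ^ (l+1) := (pow_succ _ _).symm

lemma key_bound {nz p : ℕ} (A : Matrix (Fin nz) (Fin nz) ℝ)
    (d e : ℕ → Fin nz → ℝ) (hd0 : d 0 = 0)
    (hdrec : ∀ k, d (k + 1) = A.mulVec (d k) + e k)
    (ebar : ℝ) (hebar : 0 ≤ ebar) :
    ∀ k (C : Matrix (Fin p) (Fin nz) ℝ), (∀ j < k, _root_.enorm (e j) ≤ ebar) →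
      _root_.enorm (C.mulVec (d k)) ≤ ebar * ∑ l ∈ Finset.range k, mOpNorm (C * A ^ l) := by
  intro k
  induction k with
  | zero => intro C _; simp [hd0, _root_.enorm, Matrix.mulVec_zero]
  | succ k ih =>
      intro C he
      have heC : _root_.enorm (C.mulVec (e k)) ≤ mOpNorm C * ebar := by
        calc _root_.enorm (C.mulVec (e k)) ≤ mOpNorm C * _root_.enorm (e k) := enorm_mulVec_le _ _
        _ ≤ mOpNorm C * ebar :=
            mul_le_mul_of_nonneg_left (he k (Nat.lt_succ_self k)) (mOpNorm_nonneg C)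
      have hCA := ih (C * A) (fun j hj => he j (hj.trans (Nat.lt_succ_self k)))
      have hsplit : C.mulVec (d (k+1)) = (C * A).mulVec (d k) + C.mulVec (e k) := by
        rw [hdrec, Matrix.mulVec_add, Matrix.mulVec_mulVec]
      calc _root_.enorm (C.mulVec (d (k+1)))
          ≤ _root_.enorm ((C * A).mulVec (d k)) + _root_.enorm (C.mulVec (e k)) := by
            rw [hsplit]; exact enorm_add_le_real _ _
        _ ≤ ebar * ∑ l ∈ Finset.range k, mOpNorm (C * A * A ^ l) + mOpNorm C * ebar :=
            add_le_add hCA heC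
        _ = ebar * ∑ l ∈ Finset.range (k+1), mOpNorm (C * A ^ l) := by
            rw [Finset.sum_range_succ' (fun l => mOpNorm (C * A ^ l))]
            have : ∀ l, C * A * A ^ l = C * A ^ (l + 1) := by
              intro l; rw [pow_succ']; exact Matrix.mul_assoc C A (A ^ l)
            simp only [this, pow_zero, Matrix.mul_one]
            ring

/-- tighter uniform bound `Σ ‖C·Aˡ‖` on the state-propagated error,
which is never larger than the cruder bound `‖C‖·Σ ‖A‖ˡ`. -/
theorem output_discrepancy_tighter_uniform_bound
    (nz m p : ℕ) (hnz : 0 < nz) (hm : 0 < m) (hp : 0 < p)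
    (A : Matrix (Fin nz) (Fin nz) ℝ) (B : Matrix (Fin nz) (Fin m) ℝ)
    (C : Matrix (Fin p) (Fin nz) ℝ) (D : Matrix (Fin p) (Fin m) ℝ)
    (zbar : ℕ → Fin nz → ℝ) (ubar : ℕ → Fin m → ℝ)
    (e : ℕ → Fin nz → ℝ) (η : ℕ → Fin p → ℝ)
    (hdyn : ∀ k, zbar (k + 1) = A.mulVec (zbar k) + B.mulVec (ubar k) + e k)
    (ybar : ℕ → Fin p → ℝ)
    (hy : ∀ k, ybar k = C.mulVec (zbar k) + D.mulVec (ubar k) + η k)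
    (zhat : ℕ → Fin nz → ℝ)
    (hz0 : zhat 0 = zbar 0)
    (hzrec : ∀ k, zhat (k + 1) = A.mulVec (zhat k) + B.mulVec (ubar k))
    (yhat : ℕ → Fin p → ℝ)
    (hyhat : ∀ k, yhat k = C.mulVec (zhat k) + D.mulVec (ubar k))
    (ebar : ℝ) (hebar : 0 ≤ ebar)
    (k : ℕ)
    (he : ∀ j < k, _root_.enorm (e j) ≤ ebar) :
    _root_.enorm (C.mulVec (zbar k - zhat k))
        ≤ ebar * ∑ l ∈ Finset.range k, mOpNorm (C * A ^ l)
    ∧ ∑ l ∈ Finset.range k, mOpNorm (C * A ^ l)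
        ≤ mOpNorm C * ∑ l ∈ Finset.range k, mOpNorm A ^ l := by
  constructor
  · have hd0 : zbar 0 - zhat 0 = 0 := by rw [hz0]; simp
    have hdrec : ∀ j, zbar (j + 1) - zhat (j + 1) =
        A.mulVec (zbar j - zhat j) + e j := by
      intro j
      rw [hdyn, hzrec, Matrix.mulVec_sub]
      abel
    exact key_bound A (fun j => zbar j - zhat j) e hd0 hdrec ebar hebar k C he
  · calc ∑ l ∈ Finset.range k, mOpNorm (C * A ^ l)
        ≤ ∑ l ∈ Finset.range k, mOpNorm C * mOpNorm A ^ l := by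
          apply Finset.sum_le_sum
          intro l _
          calc mOpNorm (C * A ^ l) ≤ mOpNorm C * mOpNorm (A ^ l) := mOpNorm_mul_le _ _
          _ ≤ mOpNorm C * mOpNorm A ^ l :=
              mul_le_mul_of_nonneg_left (mOpNorm_pow_le A l) (mOpNorm_nonneg C)
      _ = mOpNorm C * ∑ l ∈ Finset.range k, mOpNorm A ^ l := (Finset.mul_sum _ _ _).symm
end

section
/- Suppose the residuals satisfy the proportional-with-offset bounds ‖e_j‖₂ ≤ ε_A·‖z̄_j‖₂ + ε_B·‖ū_j‖₂ + c₀ for all j and ‖η_k‖₂ ≤ ε_C·‖z̄_k‖₂. Then for every k ≥ 0 the output discrepancy satisfies the state-dependent bound ‖ȳ_k − ŷ_k‖₂ ≤ Σ_{l=0}^{k−1} ‖C·A^l‖₂ · (ε_A·‖z̄_{k−1−l}‖₂ + ε_B·‖ū_{k−1−l}‖₂ + c₀) + ε_C·‖z̄_k‖₂. -/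
/-- Euclidean norm of a vector in `ℝⁿ`. -/
noncomputable def vecEnorm2 {n : ℕ} (v : Fin n → ℝ) : ℝ := Real.sqrt (∑ i, v i ^ 2)

section Aux

lemma vecEnorm2_eq {n : ℕ} (v : Fin n → ℝ) :
    vecEnorm2 v = ‖(WithLp.equiv 2 (Fin n → ℝ)).symm v‖ := by
  simp [vecEnorm2, EuclideanSpace.norm_eq, sq_abs]

lemma vecEnorm2_mulVec_le {m n : ℕ} (A : Matrix (Fin m) (Fin n) ℝ) (v : Fin n → ℝ) :
    vecEnorm2 (A.mulVec v) ≤ mOpNorm A * vecEnorm2 v := by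
  have h := (LinearMap.toContinuousLinearMap (Matrix.toEuclideanLin A)).le_opNorm
    ((WithLp.equiv 2 (Fin n → ℝ)).symm v)
  simpa [vecEnorm2_eq, mOpNorm, Matrix.toEuclideanLin_apply] using h

lemma vecEnorm2_add_le {n : ℕ} (v w : Fin n → ℝ) :
    vecEnorm2 (v + w) ≤ vecEnorm2 v + vecEnorm2 w := by
  simpa [vecEnorm2_eq] using norm_add_le ((WithLp.equiv 2 (Fin n → ℝ)).symm v)
    ((WithLp.equiv 2 (Fin n → ℝ)).symm w)

lemma vecEnorm2_sum_le {n : ℕ} (s : Finset ℕ) (f : ℕ → Fin n → ℝ) :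
    vecEnorm2 (∑ i ∈ s, f i) ≤ ∑ i ∈ s, vecEnorm2 (f i) := by
  have := norm_sum_le (E := EuclideanSpace ℝ (Fin n)) s
    (fun i => (WithLp.equiv 2 (Fin n → ℝ)).symm (f i))
  simpa [vecEnorm2_eq] using this

lemma mulVec_sum' {m n : ℕ} (M : Matrix (Fin m) (Fin n) ℝ) (s : Finset ℕ)
    (f : ℕ → Fin n → ℝ) :
    M.mulVec (∑ i ∈ s, f i) = ∑ i ∈ s, M.mulVec (f i) := by
  induction s using Finset.cons_induction with
  | empty => simp
  | cons a s ha ih => rw [Finset.sum_cons, Finset.sum_cons, Matrix.mulVec_add, ih]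

end Aux

/-- state-dependent output-discrepancy bound under
proportional-with-offset residual bounds. -/
theorem output_discrepancy_state_dependent_bound
    (nz m p : ℕ) (hnz : 0 < nz) (hm : 0 < m) (hp : 0 < p)
    (A : Matrix (Fin nz) (Fin nz) ℝ) (B : Matrix (Fin nz) (Fin m) ℝ)
    (C : Matrix (Fin p) (Fin nz) ℝ) (D : Matrix (Fin p) (Fin m) ℝ)
    (zbar : ℕ → Fin nz → ℝ) (ubar : ℕ → Fin m → ℝ)
    (e : ℕ → Fin nz → ℝ) (η : ℕ → Fin p → ℝ)
    (hdyn : ∀ k, zbar (k + 1) = A.mulVec (zbar k) + B.mulVec (ubar k) + e k)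
    (ybar : ℕ → Fin p → ℝ)
    (hy : ∀ k, ybar k = C.mulVec (zbar k) + D.mulVec (ubar k) + η k)
    (zhat : ℕ → Fin nz → ℝ)
    (hz0 : zhat 0 = zbar 0)
    (hzrec : ∀ k, zhat (k + 1) = A.mulVec (zhat k) + B.mulVec (ubar k))
    (yhat : ℕ → Fin p → ℝ)
    (hyhat : ∀ k, yhat k = C.mulVec (zhat k) + D.mulVec (ubar k))
    (εA εB εC c0 : ℝ) (hεA : 0 ≤ εA) (hεB : 0 ≤ εB) (hεC : 0 ≤ εC) (hc0 : 0 ≤ c0)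
    (he : ∀ j, vecEnorm2 (e j) ≤ εA * vecEnorm2 (zbar j) + εB * vecEnorm2 (ubar j) + c0)
    (hη : ∀ k, vecEnorm2 (η k) ≤ εC * vecEnorm2 (zbar k))
    (k : ℕ) :
    vecEnorm2 (ybar k - yhat k)
      ≤ (∑ l ∈ Finset.range k, mOpNorm (C * A ^ l)
            * (εA * vecEnorm2 (zbar (k - 1 - l)) + εB * vecEnorm2 (ubar (k - 1 - l)) + c0))
        + εC * vecEnorm2 (zbar k) := by

  -- state error formula
  have hd : ∀ k, zbar k - zhat k
      = ∑ l ∈ Finset.range k, (A ^ l).mulVec (e (k - 1 - l)) := by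
    intro k
    induction k with
    | zero => simp [hz0]
    | succ k ih =>
      have : zbar (k+1) - zhat (k+1) = A.mulVec (zbar k - zhat k) + e k := by
        rw [hdyn k, hzrec k, Matrix.mulVec_sub]
        abel
      rw [this, ih, Finset.sum_range_succ']
      rw [mulVec_sum']
      congr 1
      · refine Finset.sum_congr rfl fun l hl => ?_
        rw [Matrix.mulVec_mulVec, ← pow_succ',
          show k + 1 - 1 - (l + 1) = k - 1 - l from by omega]
      · simp
  -- output error formula
  have hout : ybar k - yhat k
      = (∑ l ∈ Finset.range k, (C * A ^ l).mulVec (e (k - 1 - l))) + η k := by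
    have : ybar k - yhat k = C.mulVec (zbar k - zhat k) + η k := by
      rw [hy k, hyhat k, Matrix.mulVec_sub]
      abel
    rw [this, hd k, mulVec_sum']
    simp [Matrix.mulVec_mulVec]
  rw [hout]
  refine le_trans (vecEnorm2_add_le _ _) (add_le_add ?_ (hη k))
  refine le_trans (vecEnorm2_sum_le _ _) (Finset.sum_le_sum fun l hl => ?_)
  refine le_trans (vecEnorm2_mulVec_le _ _) ?_
  have h0 : (0:ℝ) ≤ mOpNorm (C * A ^ l) := norm_nonneg _
  exact mul_le_mul_of_nonneg_left (he _) h0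
end

section
/- Let L ≥ 2 and set S_L := Σ_{l=0}^{L−2} ‖C·A^l‖₂. Suppose the residuals satisfy ‖e_j‖₂ ≤ ε_A·‖z̄_j‖₂ + c₀ for all j, η_k = 0 for all k, and there is r ≥ 0 with ‖z̄_j‖₂ ≤ r for all j ≤ L−1. Then for every k with 0 ≤ k ≤ L−1, the output discrepancy satisfies ‖ȳ_k − ŷ_k‖₂ ≤ ε_A·S_L·r + c₀·S_L. -/
/-- Euclidean norm of a vector in `ℝⁿ`. -/
noncomputable def vecEnorm {n : ℕ} (v : Fin n → ℝ) : ℝ := Real.sqrt (∑ i, v i ^ 2)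

lemma vecEnorm_eq_norm {n : ℕ} (v : Fin n → ℝ) :
    vecEnorm v = ‖(WithLp.equiv 2 (Fin n → ℝ)).symm v‖ := by
  rw [EuclideanSpace.norm_eq]
  simp [vecEnorm, sq_abs]

lemma vecEnorm_mulVec_le {m n : ℕ} (A : Matrix (Fin m) (Fin n) ℝ) (v : Fin n → ℝ) :
    vecEnorm (A.mulVec v) ≤ mOpNorm A * vecEnorm v := by
  rw [vecEnorm_eq_norm, vecEnorm_eq_norm]
  have := (LinearMap.toContinuousLinearMap (Matrix.toEuclideanLin A)).le_opNorm
    ((WithLp.equiv 2 (Fin n → ℝ)).symm v)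
  simpa [Matrix.toLin'_apply, mOpNorm] using this

lemma vecEnorm_sum_le {n : ℕ} (k : ℕ) (f : ℕ → Fin n → ℝ) :
    vecEnorm (∑ l ∈ Finset.range k, f l) ≤ ∑ l ∈ Finset.range k, vecEnorm (f l) := by
  have : (WithLp.equiv 2 (Fin n → ℝ)).symm (∑ l ∈ Finset.range k, f l)
      = ∑ l ∈ Finset.range k, (WithLp.equiv 2 (Fin n → ℝ)).symm (f l) :=
    WithLp.toLp_sum 2 _ _ _
  rw [vecEnorm_eq_norm, this]
  refine (norm_sum_le _ _).trans_eq ?_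
  simp [vecEnorm_eq_norm]

set_option maxHeartbeats 1000000 in
/-- self-consistent bound — if `‖z̄ⱼ‖ ≤ r` on the horizon, the
output discrepancy is bounded by `ε_A·S_L·r + c₀·S_L` with
`S_L = Σ_{l=0}^{L−2} ‖C·Aˡ‖`. -/
theorem output_discrepancy_self_consistent_bound
    (nz m p : ℕ) (hnz : 0 < nz) (hm : 0 < m) (hp : 0 < p)
    (A : Matrix (Fin nz) (Fin nz) ℝ) (B : Matrix (Fin nz) (Fin m) ℝ)
    (C : Matrix (Fin p) (Fin nz) ℝ) (D : Matrix (Fin p) (Fin m) ℝ)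
    (zbar : ℕ → Fin nz → ℝ) (ubar : ℕ → Fin m → ℝ)
    (e : ℕ → Fin nz → ℝ) (η : ℕ → Fin p → ℝ)
    (hdyn : ∀ k, zbar (k + 1) = A.mulVec (zbar k) + B.mulVec (ubar k) + e k)
    (ybar : ℕ → Fin p → ℝ)
    (hy : ∀ k, ybar k = C.mulVec (zbar k) + D.mulVec (ubar k) + η k)
    (zhat : ℕ → Fin nz → ℝ)
    (hz0 : zhat 0 = zbar 0)
    (hzrec : ∀ k, zhat (k + 1) = A.mulVec (zhat k) + B.mulVec (ubar k))
    (yhat : ℕ → Fin p → ℝ)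
    (hyhat : ∀ k, yhat k = C.mulVec (zhat k) + D.mulVec (ubar k))
    (εA c0 : ℝ) (hεA : 0 ≤ εA) (hc0 : 0 ≤ c0)
    (L : ℕ) (hL : 2 ≤ L)
    (he : ∀ j, vecEnorm (e j) ≤ εA * vecEnorm (zbar j) + c0)
    (hη : ∀ k, η k = 0)
    (r : ℝ) (hr : 0 ≤ r)
    (hzr : ∀ j ≤ L - 1, vecEnorm (zbar j) ≤ r)
    (k : ℕ) (hk : k ≤ L - 1) :
    vecEnorm (ybar k - yhat k)
      ≤ εA * (∑ l ∈ Finset.range (L - 1), mOpNorm (C * A ^ l)) * r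
        + c0 * (∑ l ∈ Finset.range (L - 1), mOpNorm (C * A ^ l)) := by
  have hsum : ∀ {a b : ℕ} (M : Matrix (Fin a) (Fin b) ℝ) (s : Finset ℕ) (f : ℕ → Fin b → ℝ),
      M.mulVec (∑ l ∈ s, f l) = ∑ l ∈ s, M.mulVec (f l) := fun M s f => by
    exact map_sum M.mulVecLin f s
  -- state difference formula
  have hd : ∀ k, zbar k - zhat k = ∑ l ∈ Finset.range k, (A ^ (k - 1 - l)).mulVec (e l) := by
    intro k
    induction k with
    | zero => simp [hz0]
    | succ k ih =>
      have step : zbar (k + 1) - zhat (k + 1) = A.mulVec (zbar k - zhat k) + e k := by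
        rw [hdyn, hzrec, Matrix.mulVec_sub]; abel
      rw [step, ih, Finset.sum_range_succ]
      have : A.mulVec (∑ l ∈ Finset.range k, (A ^ (k - 1 - l)).mulVec (e l))
          = ∑ l ∈ Finset.range k, (A ^ (k + 1 - 1 - l)).mulVec (e l) := by
        rw [hsum]
        refine Finset.sum_congr rfl fun l hl => ?_
        have hlk : l < k := Finset.mem_range.mp hl
        have : k + 1 - 1 - l = (k - 1 - l) + 1 := by omega
        rw [this, Matrix.mulVec_mulVec, pow_succ']
      rw [this]
      simp [Matrix.one_mulVec]
  -- output difference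
  have hout : ybar k - yhat k = ∑ l ∈ Finset.range k, (C * A ^ (k - 1 - l)).mulVec (e l) := by
    rw [hy, hyhat, hη]
    have : C.mulVec (zbar k) + D.mulVec (ubar k) + 0 - (C.mulVec (zhat k) + D.mulVec (ubar k))
        = C.mulVec (zbar k - zhat k) := by rw [Matrix.mulVec_sub]; abel
    rw [this, hd, hsum]
    exact Finset.sum_congr rfl fun l _ => by rw [Matrix.mulVec_mulVec]
  have hbound : ∀ l < k, vecEnorm (e l) ≤ εA * r + c0 := by
    intro l hl
    refine (he l).trans ?_
    have := hzr l (by omega)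
    nlinarith
  calc vecEnorm (ybar k - yhat k)
      ≤ ∑ l ∈ Finset.range k, vecEnorm ((C * A ^ (k - 1 - l)).mulVec (e l)) := by
        rw [hout]; exact vecEnorm_sum_le _ _
    _ ≤ ∑ l ∈ Finset.range k, mOpNorm (C * A ^ (k - 1 - l)) * (εA * r + c0) := by
        refine Finset.sum_le_sum fun l hl => ?_
        refine (vecEnorm_mulVec_le _ _).trans ?_
        exact mul_le_mul_of_nonneg_left (hbound l (Finset.mem_range.mp hl)) (mOpNorm_nonneg _)
    _ = (∑ l ∈ Finset.range k, mOpNorm (C * A ^ l)) * (εA * r + c0) := by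
        rw [← Finset.sum_mul]
        congr 1
        exact Finset.sum_range_reflect (fun l => mOpNorm (C * A ^ l)) k
    _ ≤ (∑ l ∈ Finset.range (L - 1), mOpNorm (C * A ^ l)) * (εA * r + c0) := by
        refine mul_le_mul_of_nonneg_right ?_ (by positivity)
        refine Finset.sum_le_sum_of_subset_of_nonneg ?_ fun i _ _ => mOpNorm_nonneg _
        exact Finset.range_subset_range.mpr hk
    _ = εA * (∑ l ∈ Finset.range (L - 1), mOpNorm (C * A ^ l)) * r
        + c0 * (∑ l ∈ Finset.range (L - 1), mOpNorm (C * A ^ l)) := by ring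
end

section
/- Suppose (u_ini, y_ini) ∈ ℝ^{m·T_ini} × ℝ^{p·T_ini} is realized by the system, i.e., there exists a state ξ₀ ∈ ℝⁿ whose trajectory under f driven by the inputs of u_ini produces the outputs y_ini under g. Then for every u_F ∈ ℝ^{m·N} and y_F ∈ ℝ^{p·N}, the stacked sequence (col(u_ini, u_F), col(y_ini, y_F)) is an input-output trajectory of the system of length L if and only if there exists g ∈ ℝˡ such that H_d·g = col(u_ini, y_ini, u_F, y_F). -/
open Matrix Finset

lemma mulVec_surj_of_li_rows {ι : Type*} [Fintype ι] {l : ℕ}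
    (M : Matrix ι (Fin l) ℝ) (h : LinearIndependent ℝ (fun r => M r)) :
    Function.Surjective M.mulVec := by
  have hr : M.rank = Fintype.card ι := h.rank_matrix
  have htop : LinearMap.range M.mulVecLin = ⊤ :=
    Submodule.eq_top_of_finrank_eq (by
      rw [show Module.finrank ℝ ↥(LinearMap.range M.mulVecLin) = M.rank from rfl, hr,
        Module.finrank_fintype_fun_eq_card])
  intro y
  obtain ⟨x, hx⟩ := LinearMap.range_eq_top.mp htop y
  exact ⟨x, by simpa [Matrix.mulVecLin_apply] using hx⟩

lemma mulVec_sum_smul {a b ι : Type*} [Fintype b] (M : Matrix a b ℝ)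
    (c : ι → ℝ) (v : ι → b → ℝ) :
    ∀ s : Finset ι, M *ᵥ (∑ i ∈ s, c i • v i) = ∑ i ∈ s, c i • (M *ᵥ v i) := by
  intro s
  simp only [← Matrix.mulVecLin_apply, map_sum, _root_.map_smul]

lemma sum_smul_apply {ι κ : Type*} [Fintype ι] (gv : ι → ℝ) (w : ι → κ → ℝ) (j : κ) :
    (∑ i, gv i • w i) j = ∑ i, w i j * gv i := by
  simp [Finset.sum_apply, mul_comm]

lemma mulVec_apply' {a b : Type*} [Fintype b] (M : Matrix a b ℝ) (v : b → ℝ) (r : a) :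
    M.mulVec v r = ∑ i, M r i * v i := rfl

lemma ch_kill {nz p : ℕ} (hnz : 0 < nz) (A : Matrix (Fin nz) (Fin nz) ℝ)
    (C : Matrix (Fin p) (Fin nz) ℝ) (v : Fin nz → ℝ)
    (h : ∀ j < nz, C *ᵥ ((A ^ j) *ᵥ v) = 0) :
    ∀ k, C *ᵥ ((A ^ k) *ᵥ v) = 0 := by
  have hdeg : A.charpoly.natDegree = nz := by
    simpa using A.charpoly_natDegree_eq_dim
  have hm : A.charpoly.coeff nz = 1 := by
    have := A.charpoly_monic
    rwa [Polynomial.Monic, Polynomial.leadingCoeff, hdeg] at this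
  have hch := Matrix.aeval_self_charpoly A
  rw [Polynomial.aeval_eq_sum_range, hdeg, Finset.sum_range_succ, hm, one_smul] at hch
  have hpow : A ^ nz = -∑ i ∈ Finset.range nz, A.charpoly.coeff i • A ^ i :=
    eq_neg_of_add_eq_zero_right hch
  intro k
  induction k using Nat.strong_induction_on with
  | _ k ih =>
    rcases lt_or_ge k nz with hk | hk
    · exact h k hk
    · have h1 : A ^ k = -∑ i ∈ Finset.range nz, A.charpoly.coeff i • A ^ (k - nz + i) := by
        calc A ^ k = A ^ (k - nz) * A ^ nz := by rw [← pow_add, Nat.sub_add_cancel hk]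
        _ = A ^ (k - nz) * (-∑ i ∈ Finset.range nz, A.charpoly.coeff i • A ^ i) := by
            rw [hpow]
        _ = -∑ i ∈ Finset.range nz, A.charpoly.coeff i • A ^ (k - nz + i) := by
            rw [mul_neg, Finset.mul_sum]
            congr 1
            refine Finset.sum_congr rfl fun i _ => ?_
            rw [Matrix.mul_smul, ← pow_add]
      rw [h1]
      have h2 : (-∑ i ∈ Finset.range nz, A.charpoly.coeff i • A ^ (k - nz + i)) *ᵥ v
          = -∑ i ∈ Finset.range nz, A.charpoly.coeff i • ((A ^ (k - nz + i)) *ᵥ v) := by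
        rw [Matrix.neg_mulVec]
        congr 1
        induction (Finset.range nz) using Finset.induction_on with
        | empty => simp
        | insert _ _ hx ihs => simp [Finset.sum_insert hx, Matrix.add_mulVec,
            Matrix.smul_mulVec, ihs]
      rw [h2, Matrix.mulVec_neg, mulVec_sum_smul]
      rw [Finset.sum_eq_zero fun i hi => by
        rw [ih _ (by have := Finset.mem_range.mp hi; omega)]; simp]
      simp

lemma diff_pow {L nz : ℕ} (A : Matrix (Fin nz) (Fin nz) ℝ) (d : Fin (L + 1) → Fin nz → ℝ)
    (hd : ∀ k : Fin L, d k.succ = A *ᵥ d k.castSucc) :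
    ∀ k : Fin (L + 1), d k = (A ^ (k : ℕ)) *ᵥ d 0 := by
  intro k
  induction k using Fin.induction with
  | zero => simp [Matrix.one_mulVec]
  | succ i ihi =>
    rw [hd i, ihi, Matrix.mulVec_mulVec]
    simp only [Fin.val_succ, Fin.coe_castSucc]
    rw [← pow_succ']

lemma append_left' {α : Type*} {T N : ℕ} (a : Fin T → α) (b : Fin N → α) {k : ℕ}
    (h1 : k < T) (h2 : k < T + N) :
    Fin.append a b ⟨k, h2⟩ = a ⟨k, h1⟩ := by
  have : (⟨k, h2⟩ : Fin (T + N)) = Fin.castAdd N ⟨k, h1⟩ := rfl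
  rw [this, Fin.append_left]

lemma append_right' {α : Type*} {T N : ℕ} (a : Fin T → α) (b : Fin N → α) {k : ℕ}
    (h1 : T ≤ k) (h2 : k < T + N) :
    Fin.append a b ⟨k, h2⟩ = b ⟨k - T, by omega⟩ := by
  have : (⟨k, h2⟩ : Fin (T + N)) = Fin.natAdd T ⟨k - T, by omega⟩ := by
    apply Fin.ext; simp [Nat.add_sub_cancel' h1]
  rw [this, Fin.append_right]

section CombFacts

variable {n m p nz Tini N l : ℕ}

lemma comb_facts
    (f : (Fin n → ℝ) → (Fin m → ℝ) → (Fin n → ℝ))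
    (g : (Fin n → ℝ) → (Fin m → ℝ) → (Fin p → ℝ))
    (Φ : (Fin n → ℝ) → (Fin nz → ℝ))
    (A : Matrix (Fin nz) (Fin nz) ℝ) (B : Matrix (Fin nz) (Fin m) ℝ)
    (C : Matrix (Fin p) (Fin nz) ℝ) (D : Matrix (Fin p) (Fin m) ℝ)
    (hAB : ∀ x u, Φ (f x u) = A.mulVec (Φ x) + B.mulVec u)
    (hCD : ∀ x u, g x u = C.mulVec (Φ x) + D.mulVec u)
    (ud : Fin l → Fin (Tini + N) → (Fin m → ℝ))
    (yd : Fin l → Fin (Tini + N) → (Fin p → ℝ))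
    (xd : Fin l → Fin (Tini + N + 1) → (Fin n → ℝ))
    (hxd : ∀ i, ∀ k : Fin (Tini + N), xd i k.succ = f (xd i k.castSucc) (ud i k))
    (hyd : ∀ i, ∀ k : Fin (Tini + N), yd i k = g (xd i k.castSucc) (ud i k))
    (gv : Fin l → ℝ) :
    (∀ k : Fin (Tini + N), (∑ i, gv i • Φ (xd i k.succ)) =
        A *ᵥ (∑ i, gv i • Φ (xd i k.castSucc)) + B *ᵥ (∑ i, gv i • ud i k)) ∧
    (∀ k : Fin (Tini + N), (∑ i, gv i • yd i k) =
        C *ᵥ (∑ i, gv i • Φ (xd i k.castSucc)) + D *ᵥ (∑ i, gv i • ud i k)) := by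
  constructor
  · intro k
    rw [mulVec_sum_smul, mulVec_sum_smul, ← Finset.sum_add_distrib]
    refine Finset.sum_congr rfl fun i _ => ?_
    rw [hxd i k, hAB, smul_add]
  · intro k
    rw [mulVec_sum_smul, mulVec_sum_smul, ← Finset.sum_add_distrib]
    refine Finset.sum_congr rfl fun i _ => ?_
    rw [hyd i k, hCD, smul_add]

end CombFacts

/-- data-driven representation (extended Willems' fundamental lemma)
for a nonlinear system admitting an exact Koopman linear embedding: given an
initial trajectory `(u_ini, y_ini)` realized by the system, a stacked sequence
`(col(u_ini, u_F), col(y_ini, y_F))` is an input-output trajectory of length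
`L = T_ini + N` iff it is a linear combination `H_d · g` of the data columns. -/
theorem data_driven_representation_exact_koopman
    (n m p nz Tini N l : ℕ)
    (hn : 0 < n) (hm : 0 < m) (hp : 0 < p) (hnz : 0 < nz)
    (hTini : 0 < Tini) (hN : 0 < N) (hlpos : 0 < l)
    (hTn : nz ≤ Tini) (hl : m * (Tini + N) + nz ≤ l)
    (f : (Fin n → ℝ) → (Fin m → ℝ) → (Fin n → ℝ))
    (g : (Fin n → ℝ) → (Fin m → ℝ) → (Fin p → ℝ))
    (Φ : (Fin n → ℝ) → (Fin nz → ℝ))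
    (hΦindep : LinearIndependent ℝ (fun q : Fin nz => fun x : Fin n → ℝ => Φ x q))
    (A : Matrix (Fin nz) (Fin nz) ℝ) (B : Matrix (Fin nz) (Fin m) ℝ)
    (C : Matrix (Fin p) (Fin nz) ℝ) (D : Matrix (Fin p) (Fin m) ℝ)
    (hAB : ∀ x u, Φ (f x u) = A.mulVec (Φ x) + B.mulVec u)
    (hCD : ∀ x u, g x u = C.mulVec (Φ x) + D.mulVec u)
    -- the offline data: `l` input-output trajectories of length `L = Tini + N`
    (ud : Fin l → Fin (Tini + N) → (Fin m → ℝ))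
    (yd : Fin l → Fin (Tini + N) → (Fin p → ℝ))
    (xd : Fin l → Fin (Tini + N + 1) → (Fin n → ℝ))
    (hxd : ∀ i, ∀ k : Fin (Tini + N), xd i k.succ = f (xd i k.castSucc) (ud i k))
    (hyd : ∀ i, ∀ k : Fin (Tini + N), yd i k = g (xd i k.castSucc) (ud i k))
    -- lifted excitation of order `L`: the rows of `H_K` are linearly independent
    (hexc : LinearIndependent ℝ
      (fun r : (Fin (Tini + N) × Fin m) ⊕ Fin nz =>
        Sum.elim (fun kj : Fin (Tini + N) × Fin m => fun i : Fin l => ud i kj.1 kj.2)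
                 (fun q : Fin nz => fun i : Fin l => Φ (xd i 0) q) r))
    -- the data matrix `H_d`
    (Hd : Matrix ((Fin Tini × Fin m) ⊕ (Fin Tini × Fin p) ⊕ (Fin N × Fin m) ⊕ (Fin N × Fin p))
          (Fin l) ℝ)
    (hHd : ∀ i : Fin l,
      (∀ kj : Fin Tini × Fin m, Hd (Sum.inl kj) i = ud i (Fin.castAdd N kj.1) kj.2) ∧
      (∀ kj : Fin Tini × Fin p, Hd (Sum.inr (Sum.inl kj)) i = yd i (Fin.castAdd N kj.1) kj.2) ∧
      (∀ kj : Fin N × Fin m,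
        Hd (Sum.inr (Sum.inr (Sum.inl kj))) i = ud i (Fin.natAdd Tini kj.1) kj.2) ∧
      (∀ kj : Fin N × Fin p,
        Hd (Sum.inr (Sum.inr (Sum.inr kj))) i = yd i (Fin.natAdd Tini kj.1) kj.2))
    -- the online initial data, realized by the system from some initial state ξ₀
    (uini : Fin Tini → Fin m → ℝ) (yini : Fin Tini → Fin p → ℝ)
    (hreal : ∃ ξ : Fin (Tini + 1) → (Fin n → ℝ),
      (∀ k : Fin Tini, ξ k.succ = f (ξ k.castSucc) (uini k)) ∧
      (∀ k : Fin Tini, yini k = g (ξ k.castSucc) (uini k)))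
    (uF : Fin N → Fin m → ℝ) (yF : Fin N → Fin p → ℝ) :
    -- the stacked sequence is an input-output trajectory of length `L` ...
    (∃ x : Fin (Tini + N + 1) → (Fin n → ℝ),
      (∀ k : Fin (Tini + N), x k.succ = f (x k.castSucc) (Fin.append uini uF k)) ∧
      (∀ k : Fin (Tini + N), Fin.append yini yF k = g (x k.castSucc) (Fin.append uini uF k)))
    ↔ -- ... iff it lies in the range of the data matrix `H_d`
    (∃ gv : Fin l → ℝ, Hd.mulVec gv =
      Sum.elim (fun kj : Fin Tini × Fin m => uini kj.1 kj.2)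
        (Sum.elim (fun kj : Fin Tini × Fin p => yini kj.1 kj.2)
          (Sum.elim (fun kj : Fin N × Fin m => uF kj.1 kj.2)
            (fun kj : Fin N × Fin p => yF kj.1 kj.2)))) := by
  obtain ⟨ξ, hξ1, hξ2⟩ := hreal
  constructor
  · -- forward direction
    rintro ⟨x, hx1, hx2⟩
    obtain ⟨gv, hgv⟩ := mulVec_surj_of_li_rows
      (fun r => Sum.elim (fun kj : Fin (Tini + N) × Fin m => fun i : Fin l => ud i kj.1 kj.2)
        (fun q : Fin nz => fun i : Fin l => Φ (xd i 0) q) r) hexc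
      (Sum.elim (fun kj : Fin (Tini + N) × Fin m => Fin.append uini uF kj.1 kj.2)
        (fun q : Fin nz => Φ (x 0) q))
    -- input match
    have hu : ∀ k : Fin (Tini + N), (∑ i, gv i • ud i k) = Fin.append uini uF k := by
      intro k
      funext j
      rw [sum_smul_apply]
      have h := congrFun hgv (Sum.inl (k, j))
      exact h
    -- initial lifted state match
    have h0 : (∑ i, gv i • Φ (xd i 0)) = Φ (x 0) := by
      funext q
      rw [sum_smul_apply]
      have h := congrFun hgv (Sum.inr q)
      exact h
    obtain ⟨hW, hY⟩ := comb_facts f g Φ A B C D hAB hCD ud yd xd hxd hyd gv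
    obtain ⟨d, hd_def⟩ : ∃ d : Fin (Tini + N + 1) → Fin nz → ℝ,
        ∀ κ, d κ = Φ (x κ) - ∑ i, gv i • Φ (xd i κ) :=
      ⟨_, fun κ => rfl⟩
    have hd : ∀ k : Fin (Tini + N), d k.succ = A *ᵥ d k.castSucc := by
      intro k
      rw [hd_def, hd_def, hx1 k, hAB, hW k, hu k, Matrix.mulVec_sub]
      abel
    -- lifted states coincide along the whole trajectory
    have hZW : ∀ k : Fin (Tini + N + 1), Φ (x k) = ∑ i, gv i • Φ (xd i k) := by
      intro k
      have h5 := diff_pow A d hd k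
      rw [hd_def, hd_def, h0, sub_self, Matrix.mulVec_zero] at h5
      exact sub_eq_zero.mp h5
    -- output match
    have hyv : ∀ k : Fin (Tini + N), (∑ i, gv i • yd i k) = Fin.append yini yF k := by
      intro k
      rw [hY k, hu k, ← hZW k.castSucc, ← hCD, ← hx2 k]
    refine ⟨gv, ?_⟩
    funext r
    rw [mulVec_apply']
    rcases r with kj | kj | kj | kj
    · simp only [Sum.elim_inl]
      rw [Finset.sum_congr rfl fun i _ => by rw [(hHd i).1 kj]]
      rw [← sum_smul_apply, hu, Fin.append_left]
    · simp only [Sum.elim_inr, Sum.elim_inl]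
      rw [Finset.sum_congr rfl fun i _ => by rw [(hHd i).2.1 kj]]
      rw [← sum_smul_apply, hyv, Fin.append_left]
    · simp only [Sum.elim_inr, Sum.elim_inl]
      rw [Finset.sum_congr rfl fun i _ => by rw [(hHd i).2.2.1 kj]]
      rw [← sum_smul_apply, hu, Fin.append_right]
    · simp only [Sum.elim_inr]
      rw [Finset.sum_congr rfl fun i _ => by rw [(hHd i).2.2.2 kj]]
      rw [← sum_smul_apply, hyv, Fin.append_right]
  · -- backward direction
    rintro ⟨gv, hgv⟩
    -- componentwise data equations in vector form
    have hu : ∀ k : Fin (Tini + N), (∑ i, gv i • ud i k) = Fin.append uini uF k := by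
      intro k
      induction k using Fin.addCases with
      | left k =>
        funext j
        rw [sum_smul_apply, Fin.append_left]
        have h := congrFun hgv (Sum.inl (k, j))
        rw [mulVec_apply'] at h
        exact (Finset.sum_congr rfl fun i _ => by rw [(hHd i).1 (k, j)]).trans h
      | right k =>
        funext j
        rw [sum_smul_apply, Fin.append_right]
        have h := congrFun hgv (Sum.inr (Sum.inr (Sum.inl (k, j))))
        rw [mulVec_apply'] at h
        exact (Finset.sum_congr rfl fun i _ => by rw [(hHd i).2.2.1 (k, j)]).trans h
    have hy : ∀ k : Fin (Tini + N), (∑ i, gv i • yd i k) = Fin.append yini yF k := by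
      intro k
      induction k using Fin.addCases with
      | left k =>
        funext j
        rw [sum_smul_apply, Fin.append_left]
        have h := congrFun hgv (Sum.inr (Sum.inl (k, j)))
        rw [mulVec_apply'] at h
        exact (Finset.sum_congr rfl fun i _ => by rw [(hHd i).2.1 (k, j)]).trans h
      | right k =>
        funext j
        rw [sum_smul_apply, Fin.append_right]
        have h := congrFun hgv (Sum.inr (Sum.inr (Sum.inr (k, j))))
        rw [mulVec_apply'] at h
        exact (Finset.sum_congr rfl fun i _ => by rw [(hHd i).2.2.2 (k, j)]).trans h
    obtain ⟨hW, hY⟩ := comb_facts f g Φ A B C D hAB hCD ud yd xd hxd hyd gv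
    -- the extended state sequence
    obtain ⟨U, hU⟩ : ∃ U : ℕ → (Fin m → ℝ),
        ∀ (k : ℕ) (h : k < Tini + N), U k = Fin.append uini uF ⟨k, h⟩ :=
      ⟨fun k => if h : k < Tini + N then Fin.append uini uF ⟨k, h⟩ else 0,
        fun k h => dif_pos h⟩
    obtain ⟨X, hX0, hXs⟩ : ∃ X : ℕ → (Fin n → ℝ),
        X 0 = ξ 0 ∧ ∀ k, X (k + 1) = f (X k) (U k) :=
      ⟨fun k => Nat.rec (ξ 0) (fun k xk => f xk (U k)) k, rfl, fun k => rfl⟩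
    -- X agrees with ξ on the first Tini steps
    have hXξ : ∀ k (h : k ≤ Tini), X k = ξ ⟨k, by omega⟩ := by
      intro k
      induction k with
      | zero => intro h; rw [hX0]; rfl
      | succ k ih =>
        intro h
        have hk : k < Tini := by omega
        have hkL : k < Tini + N := by omega
        rw [hXs k, ih (le_of_lt hk), hU k hkL, append_left' uini uF hk hkL]
        have h9 := hξ1 ⟨k, hk⟩
        rw [show (⟨k, hk⟩ : Fin Tini).succ = ⟨k + 1, by omega⟩ from rfl] at h9
        rw [show (⟨k, hk⟩ : Fin Tini).castSucc = ⟨k, by omega⟩ from rfl] at h9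
        exact h9.symm
    -- the difference of lifted trajectories
    obtain ⟨d, hd_def⟩ : ∃ d : Fin (Tini + N + 1) → Fin nz → ℝ,
        ∀ κ, d κ = Φ (X κ.val) - ∑ i, gv i • Φ (xd i κ) :=
      ⟨_, fun κ => rfl⟩
    have hd : ∀ κ : Fin (Tini + N), d κ.succ = A *ᵥ d κ.castSucc := by
      intro κ
      rw [hd_def, hd_def]
      simp only [Fin.val_succ, Fin.coe_castSucc]
      rw [hXs κ.val, hU κ.val κ.isLt, hAB, hW κ, hu κ, Matrix.mulVec_sub]
      rw [show (⟨κ.val, κ.isLt⟩ : Fin (Tini + N)) = κ from Fin.eta κ κ.isLt]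
      abel
    have hdiff := diff_pow A d hd
    -- unobservable defect, killed by Cayley–Hamilton
    have hCj : ∀ j < nz, C *ᵥ ((A ^ j) *ᵥ d 0) = 0 := by
      intro j hj
      have hjT : j < Tini := by omega
      have hjL : j < Tini + N := by omega
      have h1 : Fin.append yini yF ⟨j, hjL⟩ =
          C *ᵥ (∑ i, gv i • Φ (xd i (⟨j, hjL⟩ : Fin (Tini + N)).castSucc)) +
            D *ᵥ Fin.append uini uF ⟨j, hjL⟩ := by
        rw [← hy ⟨j, hjL⟩, hY ⟨j, hjL⟩, hu ⟨j, hjL⟩]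
      have h2 : Fin.append yini yF ⟨j, hjL⟩ =
          C *ᵥ Φ (X j) + D *ᵥ Fin.append uini uF ⟨j, hjL⟩ := by
        rw [append_left' yini yF hjT hjL, hξ2 ⟨j, hjT⟩, hCD]
        rw [show (⟨j, hjT⟩ : Fin Tini).castSucc = ⟨j, by omega⟩ from rfl]
        rw [show X j = ξ ⟨j, by omega⟩ from hXξ j (le_of_lt hjT)]
        rw [show uini ⟨j, hjT⟩ = Fin.append uini uF ⟨j, hjL⟩ from
          (append_left' uini uF hjT hjL).symm]
      have h4 := h2.symm.trans h1
      have h3 : C *ᵥ d (⟨j, hjL⟩ : Fin (Tini + N)).castSucc = 0 := by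
        rw [hd_def, Matrix.mulVec_sub, sub_eq_zero]
        exact add_right_cancel h4
      rw [hdiff (⟨j, hjL⟩ : Fin (Tini + N)).castSucc] at h3
      exact h3
    have hCall := ch_kill hnz A C (d 0) hCj
    -- the candidate state trajectory
    refine ⟨fun k => X k.val, ?_, ?_⟩
    · intro k
      simp only [Fin.val_succ, Fin.coe_castSucc]
      rw [hXs k.val, hU k.val k.isLt]
    · -- outputs
      intro k
      have h1 : Fin.append yini yF k =
          C *ᵥ (∑ i, gv i • Φ (xd i k.castSucc)) + D *ᵥ Fin.append uini uF k := by
        rw [← hy k, hY k, hu k]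
      have h7 : C *ᵥ d k.castSucc = 0 := by
        rw [hdiff k.castSucc]
        exact hCall _
      rw [hd_def, Matrix.mulVec_sub, sub_eq_zero] at h7
      rw [hCD, h1, h7]
end

section
/- For every state x ∈ ℝ³ and input u ∈ ℝ, the first three components of the residual e := (Φ(f(x,u)) − Φ(x_s)) − A·(Φ(x) − Φ(x_s)) − B·(u − u_s) vanish. Equivalently, writing z̄ := Φ(x) − Φ(x_s), z̄⁺ := Φ(f(x,u)) − Φ(x_s), ū := u − u_s: z̄⁺₁ = z̄₁ + Δt·z̄₂, z̄⁺₂ = (1 − α_d·D)·z̄₂ − α_d·γ·z̄₆ + α_d·ū, and z̄⁺₃ = (1 − α_q·κ)·z̄₃ + α_q·μ·z̄₅; in particular the constant term α_q·E_fd cancels exactly by centering at the equilibrium. -/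
open Real

section Aux
variable {α : Type*} (a0 a1 a2 a3 a4 a5 a6 : α)

lemma vec7_0_s7 : ![a0,a1,a2,a3,a4,a5,a6] 0 = a0 := rfl
lemma vec7_1_s7 : ![a0,a1,a2,a3,a4,a5,a6] 1 = a1 := rfl
lemma vec7_2_s7 : ![a0,a1,a2,a3,a4,a5,a6] 2 = a2 := rfl
lemma vec7_3_s7 : ![a0,a1,a2,a3,a4,a5,a6] 3 = a3 := rfl
lemma vec7_4_s7 : ![a0,a1,a2,a3,a4,a5,a6] 4 = a4 := rfl
lemma vec7_5_s7 : ![a0,a1,a2,a3,a4,a5,a6] 5 = a5 := rfl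
lemma vec7_6_s7 : ![a0,a1,a2,a3,a4,a5,a6] 6 = a6 := rfl
lemma vec3_0 : ![a0,a1,a2] 0 = a0 := rfl
lemma vec3_1 : ![a0,a1,a2] 1 = a1 := rfl
lemma vec3_2 : ![a0,a1,a2] 2 = a2 := rfl

end Aux

/-- the first three components of the Koopman residual vanish
exactly; the constant term `α_q·E_fd` cancels by centering at the equilibrium. -/
theorem koopman_first_three_components_exact
    (P : GenParams) (xs : Fin 3 → ℝ) (us : ℝ) (hequil : P.f xs us = xs)
    (x : Fin 3 → ℝ) (u : ℝ) :
    (((P.Φ (P.f x u) - P.Φ xs) - P.Amat.mulVec (P.Φ x - P.Φ xs) - (u - us) • P.Bvec) 0 = 0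
      ∧ ((P.Φ (P.f x u) - P.Φ xs) - P.Amat.mulVec (P.Φ x - P.Φ xs) - (u - us) • P.Bvec) 1 = 0
      ∧ ((P.Φ (P.f x u) - P.Φ xs) - P.Amat.mulVec (P.Φ x - P.Φ xs) - (u - us) • P.Bvec) 2 = 0)
    ∧ ((P.Φ (P.f x u) - P.Φ xs) 0
          = (P.Φ x - P.Φ xs) 0 + P.Δt * (P.Φ x - P.Φ xs) 1
      ∧ (P.Φ (P.f x u) - P.Φ xs) 1
          = (1 - P.αd * P.D) * (P.Φ x - P.Φ xs) 1
            - P.αd * P.γ * (P.Φ x - P.Φ xs) 5 + P.αd * (u - us)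
      ∧ (P.Φ (P.f x u) - P.Φ xs) 2
          = (1 - P.αq * P.κ) * (P.Φ x - P.Φ xs) 2
            + P.αq * P.μ * (P.Φ x - P.Φ xs) 4) := by
  have h0 := congrFun hequil 0
  have h1 := congrFun hequil 1
  have h2 := congrFun hequil 2
  simp only [GenParams.f, vec3_0, vec3_1, vec3_2] at h0 h1 h2
  have hαd : P.αd ≠ 0 := div_ne_zero P.hΔt.ne' P.hM.ne'
  have hαq : P.αq ≠ 0 := div_ne_zero P.hΔt.ne' P.hTd0.ne'
  have hω : xs 1 = P.ωs := by
    have h : P.Δt * (xs 1 - P.ωs) = 0 := by linarith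
    rcases mul_eq_zero.mp h with h | h
    · exact absurd h P.hΔt.ne'
    · linarith
  have hu : us - P.D * (xs 1 - P.ωs) - P.γ * (xs 2 * Real.sin (xs 0)) = 0 := by
    have h : P.αd * (us - P.D * (xs 1 - P.ωs) - P.γ * (xs 2 * Real.sin (xs 0))) = 0 := by
      linarith
    rcases mul_eq_zero.mp h with h | h
    · exact absurd h hαd
    · exact h
  have hE : P.Efd - P.κ * xs 2 + P.μ * Real.cos (xs 0) = 0 := by
    have h : P.αq * (P.Efd - P.κ * xs 2 + P.μ * Real.cos (xs 0)) = 0 := by linarith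
    rcases mul_eq_zero.mp h with h | h
    · exact absurd h hαq
    · exact h
  have hu' : us = P.γ * (xs 2 * Real.sin (xs 0)) := by rw [hω] at hu; linarith
  have hE' : P.Efd = P.κ * xs 2 - P.μ * Real.cos (xs 0) := by linarith
  have key : ∀ v : Fin 7 → ℝ, P.Amat.mulVec v =
      ![v 0 + P.Δt * v 1,
        (1 - P.αd * P.D) * v 1 + -(P.αd * P.γ) * v 5,
        (1 - P.αq * P.κ) * v 2 + P.αq * P.μ * v 4,
        v 3, v 4,
        (1 - P.αq * P.κ) * v 5,
        (1 - P.αq * P.κ) * v 6] := by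
    intro v
    funext i
    fin_cases i <;>
      simp only [Matrix.mulVec, dotProduct, GenParams.Amat, Fin.sum_univ_seven,
        Matrix.cons_val', Matrix.cons_val_zero, Matrix.cons_val_one, Matrix.head_cons,
        Matrix.empty_val', Matrix.cons_val_fin_one, Matrix.of_apply, Fin.isValue,
        vec7_0_s7, vec7_1_s7, vec7_2_s7, vec7_3_s7, vec7_4_s7, vec7_5_s7, vec7_6_s7] <;>
      norm_num [vec7_0_s7, vec7_1_s7, vec7_2_s7, vec7_3_s7, vec7_4_s7, vec7_5_s7, vec7_6_s7]
  rw [key]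
  simp only [GenParams.f, GenParams.Φ, GenParams.Bvec,
    Pi.sub_apply, Pi.smul_apply, smul_eq_mul,
    vec3_0, vec3_1, vec3_2,
    vec7_0_s7, vec7_1_s7, vec7_2_s7, vec7_3_s7, vec7_4_s7, vec7_5_s7, vec7_6_s7]
  rw [hω, hu', hE']
  refine ⟨⟨by ring, by ring, by ring⟩, by ring, by ring, by ring⟩
end

section
/- Let x = (δ, ω, E'q) be admissible. Then the fifth lifted component satisfies |cos(δ + Δt·(ω − ω_s)) − cos δ| ≤ Δt·‖Φ(x) − Φ(x_s)‖₂ + (Δt·ω_max)². -/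
open Real

/-- Euclidean norm of a vector in `ℝⁿ`. -/
noncomputable def enormFin {n : ℕ} (v : Fin n → ℝ) : ℝ := Real.sqrt (∑ i, v i ^ 2)

/-- one-step propagation error of the fifth lifted component `cos δ`. -/
theorem koopman_cos_component_bound
    (P : GenParams) (ωmax Eqmax : ℝ) (hωmax : 0 ≤ ωmax) (hEqmax : 0 ≤ Eqmax)
    (hsmall : P.Δt * ωmax ≤ 3)
    (xs : Fin 3 → ℝ) (us : ℝ) (hequil : P.f xs us = xs)
    (x : Fin 3 → ℝ) (hx : P.Admissible ωmax Eqmax x) :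
    |Real.cos (x 0 + P.Δt * (x 1 - P.ωs)) - Real.cos (x 0)|
      ≤ P.Δt * enormFin (P.Φ x - P.Φ xs) + (P.Δt * ωmax) ^ 2 :=
  by
  -- equilibrium forces xs 1 = ωs
  have hxs1 : xs 1 = P.ωs := by
    have h0 := congrFun hequil 0
    simp [GenParams.f] at h0
    rcases h0 with h | h
    · exact absurd h (ne_of_gt P.hΔt)
    · linarith
  -- Lipschitz bound on cos
  have hcos : |Real.cos (x 0 + P.Δt * (x 1 - P.ωs)) - Real.cos (x 0)|
      ≤ |P.Δt * (x 1 - P.ωs)| := by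
    rw [Real.cos_sub_cos]
    have h1 : |Real.sin ((x 0 + P.Δt * (x 1 - P.ωs) + x 0) / 2)| ≤ 1 :=
      Real.abs_sin_le_one _
    have h2 : |Real.sin ((x 0 + P.Δt * (x 1 - P.ωs) - x 0) / 2)|
        ≤ |(x 0 + P.Δt * (x 1 - P.ωs) - x 0) / 2| := Real.abs_sin_le_abs
    have h3 : |(x 0 + P.Δt * (x 1 - P.ωs) - x 0) / 2| = |P.Δt * (x 1 - P.ωs)| / 2 := by
      rw [abs_div]
      norm_num
    rw [abs_mul, abs_mul, abs_neg]
    calc |(2 : ℝ)| * |Real.sin ((x 0 + P.Δt * (x 1 - P.ωs) + x 0) / 2)|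
          * |Real.sin ((x 0 + P.Δt * (x 1 - P.ωs) - x 0) / 2)|
        ≤ 2 * 1 * (|P.Δt * (x 1 - P.ωs)| / 2) := by
          apply mul_le_mul _ (h3 ▸ h2) (abs_nonneg _) (by norm_num)
          apply mul_le_mul _ h1 (abs_nonneg _) (by norm_num)
          simp
      _ = |P.Δt * (x 1 - P.ωs)| := by ring
  -- the second lifted component
  have hv : |P.Δt * (x 1 - P.ωs)| ≤ P.Δt * enormFin (P.Φ x - P.Φ xs) := by
    rw [abs_mul, abs_of_pos P.hΔt]
    apply mul_le_mul_of_nonneg_left _ P.hΔt.le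
    have hv1 : (P.Φ x - P.Φ xs) 1 = x 1 - P.ωs := by
      simp [GenParams.Φ, hxs1]
    have : |(P.Φ x - P.Φ xs) 1| ≤ enormFin (P.Φ x - P.Φ xs) := by
      unfold enormFin
      rw [← Real.sqrt_sq_eq_abs]
      apply Real.sqrt_le_sqrt
      exact Finset.single_le_sum (f := fun i => (P.Φ x - P.Φ xs) i ^ 2)
        (fun i _ => sq_nonneg _) (Finset.mem_univ 1)
    rwa [hv1] at this
  have hsq : (0:ℝ) ≤ (P.Δt * ωmax) ^ 2 := sq_nonneg _
  linarith
end

section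
/- Let x = (δ, ω, E'q) be admissible, u ∈ ℝ, and suppose x⁺ = (δ⁺, ω⁺, E'q⁺) := f(x, u) is also admissible. Assume μ ≥ 0 and E_fd ≥ 0. Define the seventh-component residual e₇ := (E'q⁺·cos δ⁺ − E'q,s·cos δ_s) − (1 − α_q·κ)·(E'q·cos δ − E'q,s·cos δ_s). Then |e₇| ≤ c₇·‖Φ(x) − Φ(x_s)‖₂ + E'q,max·(Δt·ω_max)², where c₇ := 2·α_q·μ + α_q·E_fd + E'q,max·Δt. -/
open Real

/-- Euclidean norm of a vector in `ℝⁿ`. -/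
noncomputable def enorm₂ {n : ℕ} (v : Fin n → ℝ) : ℝ := Real.sqrt (∑ i, v i ^ 2)

lemma abs_apply_le_enorm₂ {n : ℕ} (v : Fin n → ℝ) (i : Fin n) : |v i| ≤ enorm₂ v := by
  rw [enorm₂, ← Real.sqrt_sq_eq_abs]
  exact Real.sqrt_le_sqrt (Finset.single_le_sum (fun j _ => sq_nonneg (v j)) (Finset.mem_univ i))

set_option maxHeartbeats 1000000 in
/-- bound on the seventh-component residual `e₇` of the Koopman embedding. -/
theorem koopman_seventh_component_residual_bound
    (P : GenParams) (ωmax Eqmax : ℝ) (hωmax : 0 ≤ ωmax) (hEqmax : 0 ≤ Eqmax)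
    (hsmall : P.Δt * ωmax ≤ 3)
    (xs : Fin 3 → ℝ) (us : ℝ) (hequil : P.f xs us = xs)
    (hμ : 0 ≤ P.μ) (hEfd : 0 ≤ P.Efd)
    (x : Fin 3 → ℝ) (u : ℝ)
    (hx : P.Admissible ωmax Eqmax x)
    (hx' : P.Admissible ωmax Eqmax (P.f x u)) :
    |((P.f x u) 2 * Real.cos ((P.f x u) 0) - xs 2 * Real.cos (xs 0))
        - (1 - P.αq * P.κ) * (x 2 * Real.cos (x 0) - xs 2 * Real.cos (xs 0))|
      ≤ (2 * P.αq * P.μ + P.αq * P.Efd + Eqmax * P.Δt) * enorm₂ (P.Φ x - P.Φ xs)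
          + Eqmax * (P.Δt * ωmax) ^ 2 := by
  have hαq : 0 < P.αq := div_pos P.hΔt P.hTd0
  have hΔt := P.hΔt
  -- equilibrium facts
  have h0 := congrFun hequil 0
  have h2 := congrFun hequil 2
  simp [GenParams.f] at h0 h2
  have hωeq : xs 1 = P.ωs := by
    rcases h0 with h0 | h0
    · exact absurd h0 (ne_of_gt hΔt)
    · linarith
  have hEs : P.κ * xs 2 = P.Efd + P.μ * Real.cos (xs 0) := by
    rcases h2 with h2 | h2
    · exact absurd h2 (ne_of_gt hαq)
    · linarith
  set δ := x 0
  set ω := x 1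
  set E := x 2
  set δs := xs 0
  set Es := xs 2
  set N := enorm₂ (P.Φ x - P.Φ xs) with hN
  have hNnn : 0 ≤ N := Real.sqrt_nonneg _
  set h := P.Δt * (ω - P.ωs) with hh
  have hδp : (P.f x u) 0 = δ + h := by simp [GenParams.f]; rfl
  have hEp : (P.f x u) 2 = E + P.αq * (P.Efd - P.κ * E + P.μ * Real.cos δ) := by
    simp [GenParams.f]; rfl
  set Ep := (P.f x u) 2 with hEpdef
  set c := Real.cos δ
  set cs := Real.cos δs
  set cp := Real.cos (δ + h)
  have key : (Ep * Real.cos ((P.f x u) 0) - Es * cs)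
        - (1 - P.αq * P.κ) * (E * c - Es * cs)
      = P.αq * P.Efd * (c - cs) + P.αq * P.μ * (c + cs) * (c - cs) + Ep * (cp - c) := by
    rw [hδp, hEp]
    linear_combination (-(P.αq * cs)) * hEs
  rw [key]
  -- component bounds
  have hc4 : |c - cs| ≤ N := by
    have := abs_apply_le_enorm₂ (P.Φ x - P.Φ xs) 4
    simpa [GenParams.Φ, hN] using this
  have hc1 : |ω - P.ωs| ≤ N := by
    have := abs_apply_le_enorm₂ (P.Φ x - P.Φ xs) 1
    simpa [GenParams.Φ, hN, hωeq] using this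
  have hEpb : |Ep| ≤ Eqmax := by
    obtain ⟨-, h1, h2⟩ := hx'
    rw [abs_of_nonneg h1]; exact h2
  have hcc : |cp - c| ≤ |h| + h ^ 2 / 2 := by
    have hexp : cp - c = c * (Real.cos h - 1) - Real.sin δ * Real.sin h := by
      rw [show cp = Real.cos (δ + h) from rfl, Real.cos_add]; ring
    rw [hexp]
    have h1 : |Real.cos h - 1| ≤ h ^ 2 / 2 := by
      rw [abs_sub_comm, abs_of_nonneg (by linarith [Real.cos_le_one h])]
      linarith [Real.one_sub_sq_div_two_le_cos (x := h)]
    have h2 : |Real.sin h| ≤ |h| := Real.abs_sin_le_abs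
    calc |c * (Real.cos h - 1) - Real.sin δ * Real.sin h|
        ≤ |c * (Real.cos h - 1)| + |Real.sin δ * Real.sin h| := abs_sub _ _
      _ ≤ 1 * (h ^ 2 / 2) + 1 * |h| := by
          rw [abs_mul, abs_mul]
          gcongr
          · exact Real.abs_cos_le_one δ
          · exact Real.abs_sin_le_one δ
      _ = |h| + h ^ 2 / 2 := by ring
  have hωb : |ω - P.ωs| ≤ ωmax := hx.1
  have habsh : |h| = P.Δt * |ω - P.ωs| := by
    rw [hh, abs_mul, abs_of_pos hΔt]
  have T1 : |P.αq * P.Efd * (c - cs)| ≤ P.αq * P.Efd * N := by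
    rw [abs_mul, abs_of_nonneg (by positivity)]
    exact mul_le_mul_of_nonneg_left hc4 (by positivity)
  have T2 : |P.αq * P.μ * (c + cs) * (c - cs)| ≤ 2 * P.αq * P.μ * N := by
    rw [abs_mul]
    have : |P.αq * P.μ * (c + cs)| ≤ 2 * (P.αq * P.μ) := by
      rw [abs_mul, abs_of_nonneg (by positivity)]
      have : |c + cs| ≤ 2 := by
        calc |c + cs| ≤ |c| + |cs| := abs_add_le _ _
          _ ≤ 1 + 1 := add_le_add (Real.abs_cos_le_one δ) (Real.abs_cos_le_one δs)
          _ = 2 := by norm_num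
      nlinarith [abs_nonneg (c + cs), mul_nonneg hαq.le hμ]
    calc |P.αq * P.μ * (c + cs)| * |c - cs| ≤ 2 * (P.αq * P.μ) * N := by
          exact mul_le_mul this hc4 (abs_nonneg _) (by positivity)
      _ = 2 * P.αq * P.μ * N := by ring
  have T3 : |Ep * (cp - c)| ≤ Eqmax * P.Δt * N + Eqmax * (P.Δt * ωmax) ^ 2 := by
    rw [abs_mul]
    have step : |cp - c| ≤ P.Δt * |ω - P.ωs| + (P.Δt * |ω - P.ωs|) ^ 2 / 2 := by
      rw [← habsh]
      calc |cp - c| ≤ |h| + h ^ 2 / 2 := hcc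
        _ = |h| + |h| ^ 2 / 2 := by rw [sq_abs]
    have hEpnn : 0 ≤ |Ep| := abs_nonneg _
    calc |Ep| * |cp - c| ≤ Eqmax * (P.Δt * |ω - P.ωs| + (P.Δt * |ω - P.ωs|) ^ 2 / 2) := by
          apply mul_le_mul hEpb step (abs_nonneg _) hEqmax
      _ ≤ Eqmax * P.Δt * N + Eqmax * (P.Δt * ωmax) ^ 2 := by
          have hb1 : P.Δt * |ω - P.ωs| ≤ P.Δt * N := by
            exact mul_le_mul_of_nonneg_left hc1 hΔt.le
          have hb2 : (P.Δt * |ω - P.ωs|) ^ 2 ≤ (P.Δt * ωmax) ^ 2 :=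
            pow_le_pow_left₀ (by positivity)
              (mul_le_mul_of_nonneg_left hωb hΔt.le) 2
          nlinarith [sq_nonneg (P.Δt * ωmax)]
  calc |P.αq * P.Efd * (c - cs) + P.αq * P.μ * (c + cs) * (c - cs) + Ep * (cp - c)|
      ≤ |P.αq * P.Efd * (c - cs)| + |P.αq * P.μ * (c + cs) * (c - cs)| + |Ep * (cp - c)| :=
        (abs_add_le _ _).trans (add_le_add_left (abs_add_le _ _) _)
    _ ≤ P.αq * P.Efd * N + 2 * P.αq * P.μ * N + (Eqmax * P.Δt * N + Eqmax * (P.Δt * ωmax) ^ 2) :=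
        add_le_add (add_le_add T1 T2) T3
    _ = (2 * P.αq * P.μ + P.αq * P.Efd + Eqmax * P.Δt) * N + Eqmax * (P.Δt * ωmax) ^ 2 := by ring
end

section
/- Every column of the controllability matrix K := [B, A·B, A²·B, …, A⁶·B] ∈ ℝ^{7×7} lies in the span of the first two standard basis vectors e₁, e₂ of ℝ⁷; hence rank K ≤ 2. Moreover, if α_d ≠ 0 (and Δt > 0), then rank K = 2, so the pair (A, B) is not controllable. -/
open Real

private lemma vec7_five {α : Type*} (a b c d e f g : α) :
    (![a, b, c, d, e, f, g] : Fin 7 → α) 5 = f := rfl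

private lemma vec7_six {α : Type*} (a b c d e f g : α) :
    (![a, b, c, d, e, f, g] : Fin 7 → α) 6 = g := rfl

private lemma cons7_five {α : Type*} (x : α) (u : Fin 6 → α) : Matrix.vecCons x u 5 = u 4 := rfl
private lemma cons7_six {α : Type*} (x : α) (u : Fin 6 → α) : Matrix.vecCons x u 6 = u 5 := rfl
private lemma cons6_four {α : Type*} (x : α) (u : Fin 5 → α) : Matrix.vecCons x u 4 = u 3 := rfl
private lemma cons6_five {α : Type*} (x : α) (u : Fin 5 → α) : Matrix.vecCons x u 5 = u 4 := rfl
private lemma cons5_four {α : Type*} (x : α) (u : Fin 4 → α) : Matrix.vecCons x u 4 = u 3 := rfl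

private lemma genAux_zero_tail (P : GenParams) (n : ℕ) :
    ∀ i : Fin 7, 2 ≤ (i : ℕ) → ((P.Amat ^ n).mulVec P.Bvec) i = 0 := by
  induction n with
  | zero =>
    intro i hi
    rw [pow_zero, Matrix.one_mulVec]
    fin_cases i <;>
      first
        | exact absurd hi (by decide)
        | simp [GenParams.Bvec, vec7_five, vec7_six, cons7_five, cons7_six, cons6_four, cons6_five, cons5_four]
        | rfl
  | succ n ih =>
    intro i hi
    rw [pow_succ', ← Matrix.mulVec_mulVec]
    set w := (P.Amat ^ n).mulVec P.Bvec with hw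
    have h2 : w 2 = 0 := ih 2 (by decide)
    have h3 : w 3 = 0 := ih 3 (by decide)
    have h4 : w 4 = 0 := ih 4 (by decide)
    have h5 : w 5 = 0 := ih 5 (by decide)
    have h6 : w 6 = 0 := ih 6 (by decide)
    fin_cases i <;>
      first
        | exact absurd hi (by decide)
        | simp [GenParams.Amat, Matrix.mulVec, dotProduct, Fin.sum_univ_seven,
            vec7_five, vec7_six, cons7_five, cons7_six, cons6_four, cons6_five, cons5_four, h2, h3, h4, h5, h6]

private lemma genAux_mem_span (v : Fin 7 → ℝ)
    (h : ∀ i : Fin 7, 2 ≤ (i : ℕ) → v i = 0) :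
    v ∈ Submodule.span ℝ ({Pi.single 0 1, Pi.single 1 1} : Set (Fin 7 → ℝ)) := by
  have h2 := h 2 (by decide)
  have h3 := h 3 (by decide)
  have h4 := h 4 (by decide)
  have h5 := h 5 (by decide)
  have h6 := h 6 (by decide)
  have hv : v = v 0 • (Pi.single 0 1 : Fin 7 → ℝ) + v 1 • (Pi.single 1 1 : Fin 7 → ℝ) := by
    funext i
    fin_cases i <;> simp_all [Pi.single_apply]
  rw [hv]
  exact Submodule.add_mem _
    (Submodule.smul_mem _ _ (Submodule.subset_span (Or.inl rfl)))
    (Submodule.smul_mem _ _ (Submodule.subset_span (Or.inr rfl)))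

/-- the controllability matrix `K = [B, AB, …, A⁶B]` has all its
columns in `span {e₁, e₂}`, hence rank at most 2; if `α_d ≠ 0` its rank equals 2,
so `(A, B)` is not controllable (the Kalman rank condition `rank K = 7` fails). -/
theorem controllability_matrix_rank_two
    (P : GenParams) (K : Matrix (Fin 7) (Fin 7) ℝ)
    (hK : ∀ i j : Fin 7, K i j = ((P.Amat ^ (j : ℕ)).mulVec P.Bvec) i) :
    (∀ j : Fin 7, (fun i => K i j) ∈
        Submodule.span ℝ ({Pi.single 0 1, Pi.single 1 1} : Set (Fin 7 → ℝ)))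
    ∧ K.rank ≤ 2
    ∧ (P.αd ≠ 0 → K.rank = 2 ∧ K.rank < 7) := by
  
  have hzero : ∀ j i : Fin 7, 2 ≤ (i : ℕ) → K i j = 0 := fun j i hi =>
    (hK i j).trans (genAux_zero_tail P (j : ℕ) i hi)
  have hspan : ∀ j : Fin 7, (fun i => K i j) ∈
      Submodule.span ℝ ({Pi.single 0 1, Pi.single 1 1} : Set (Fin 7 → ℝ)) :=
    fun j => genAux_mem_span _ (fun i hi => hzero j i hi)
  have hle : K.rank ≤ 2 := by
    rw [Matrix.rank_eq_finrank_span_cols]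
    have hsub : Submodule.span ℝ (Set.range K.transpose) ≤
        Submodule.span ℝ ({Pi.single 0 1, Pi.single 1 1} : Set (Fin 7 → ℝ)) := by
      rw [Submodule.span_le]
      rintro _ ⟨j, rfl⟩
      exact hspan j
    refine (Submodule.finrank_mono hsub).trans ?_
    refine (finrank_span_le_card _).trans ?_
    classical
    rw [Set.toFinset_insert, Set.toFinset_singleton]
    exact (Finset.card_insert_le _ _).trans (by simp)
  refine ⟨hspan, hle, fun hαd => ?_⟩
  have hΔt : P.Δt ≠ 0 := ne_of_gt P.hΔt
  have e00 : K 0 0 = 0 := by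
    rw [hK]; simp [Matrix.one_mulVec, GenParams.Bvec]
  have e10 : K 1 0 = P.αd := by
    rw [hK]; simp [Matrix.one_mulVec, GenParams.Bvec]
  have e01 : K 0 1 = P.Δt * P.αd := by
    rw [hK]
    simp [Fin.val_one, pow_one, GenParams.Amat, GenParams.Bvec, Matrix.mulVec,
      dotProduct, Fin.sum_univ_seven, vec7_five, vec7_six, cons7_five, cons7_six, cons6_four, cons6_five, cons5_four]
  have e11 : K 1 1 = (1 - P.αd * P.D) * P.αd := by
    rw [hK]
    simp [Fin.val_one, pow_one, GenParams.Amat, GenParams.Bvec, Matrix.mulVec,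
      dotProduct, Fin.sum_univ_seven, vec7_five, vec7_six, cons7_five, cons7_six, cons6_four, cons6_five, cons5_four]
  have hli : LinearIndependent ℝ ![(fun i => K i 0), (fun i => K i 1)] := by
    rw [LinearIndependent.pair_iff]
    intro s t hst
    have h0 := congrFun hst 0
    have h1 := congrFun hst 1
    simp only [Pi.add_apply, Pi.smul_apply, smul_eq_mul, Pi.zero_apply,
      e00, e01, e10, e11] at h0 h1
    have ht : t = 0 := by
      rcases mul_eq_zero.mp (by linarith : t * (P.Δt * P.αd) = 0) with h | h
      · exact h
      · exact absurd h (mul_ne_zero hΔt hαd)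
    subst ht
    have hs : s = 0 := by
      rcases mul_eq_zero.mp (by linarith : s * P.αd = 0) with h | h
      · exact h
      · exact absurd h hαd
    exact ⟨hs, rfl⟩
  have hge : 2 ≤ K.rank := by
    rw [Matrix.rank_eq_finrank_span_cols]
    have hsub : Submodule.span ℝ
        (Set.range ![(fun i => K i 0), (fun i => K i 1)]) ≤
        Submodule.span ℝ (Set.range K.transpose) := by
      rw [Submodule.span_le]
      rintro _ ⟨i, rfl⟩
      fin_cases i
      · exact Submodule.subset_span ⟨0, by ext k; simp [Matrix.transpose_apply]⟩
      · exact Submodule.subset_span ⟨1, by ext k; simp [Matrix.transpose_apply]⟩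
    have hcard := finrank_span_eq_card hli
    rw [Fintype.card_fin] at hcard
    calc 2 = Module.finrank ℝ (Submodule.span ℝ
          (Set.range ![(fun i => K i 0), (fun i => K i 1)])) := hcard.symm
      _ ≤ _ := Submodule.finrank_mono hsub
  exact ⟨le_antisymm hle hge, lt_of_le_of_lt hle (by norm_num)⟩
end
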